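/- arXiv:2309.07902 — 5 statements merged into one kernel-verified Lean document; each statement's English description precedes it below -/
import Mathlib

section
/- Let A ∈ 𝔪. Then the entrywise Bochner integral over G satisfies ∫_G (φ(g) A φ(g)⁻¹) ⊗ (φ(g) A φ(g)⁻¹) dμ(g) = (‖A‖_F² / d) · K, where ⊗ denotes the Kronecker product of N×N matrices and K = Σ_{j=1}^d F_j ⊗ F_j is the split Casimir. -/
/-!
Let `c g = φ(g) A φ(g)⁻¹` and let `Φ Z = ∫ ⟨c g, Z⟩ c g dμ` be the frame operator of the orbit,
with `⟨X, Z⟩ = -Tr(XZ)`. Left invariance of Haar measure and invariance of the trace form under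
conjugation make `Φ` commute with the adjoint action, and `Φ` maps `𝔪_ℂ` to itself, so by Schur's
lemma `Φ = λ` on `𝔪_ℂ`. Testing `Φ F_k = λ F_k` against `F_j` shows that the coefficients
`⟨F_j, c g⟩` have Gram matrix `∫ ⟨F_j, c⟩⟨F_k, c⟩ = λ δ_jk`; expanding `c ⊗ c` in the basis
`F_j ⊗ F_k` gives `∫ c ⊗ c = λ K`, and taking the trace of the Gram matrix gives
`d λ = ∫ ‖c g‖² = ‖A‖²`.
-/

open MeasureTheory Matrix
open scoped Kronecker

attribute [local instance] Matrix.normedAddCommGroup Matrix.normedSpace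

section Orthonormal

variable {n ι R : Type*} [Fintype n] [Fintype ι] [DecidableEq ι] [CommRing R]
  {F : ι → Matrix n n R}

theorem trace_mul_sum_smul_of_orthonormal
    (horth : ∀ j k, trace (F j * F k) = if j = k then (-1 : R) else 0) (c : ι → R) (j : ι) :
    trace (F j * ∑ i, c i • F i) = -c j := by
  simp [Finset.mul_sum, trace_sum, horth]

theorem eq_sum_smul_of_mem_span_of_orthonormal
    (horth : ∀ j k, trace (F j * F k) = if j = k then (-1 : R) else 0)
    {X : Matrix n n R} (hX : X ∈ Submodule.span R (Set.range F)) :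
    X = ∑ j, -trace (F j * X) • F j := by
  obtain ⟨c, rfl⟩ := (Submodule.mem_span_range_iff_exists_fun R).mp hX
  simp [trace_mul_sum_smul_of_orthonormal horth]

theorem trace_mul_of_mem_span_of_orthonormal
    (horth : ∀ j k, trace (F j * F k) = if j = k then (-1 : R) else 0)
    {X : Matrix n n R} (hX : X ∈ Submodule.span R (Set.range F)) (Y : Matrix n n R) :
    trace (X * Y) = -∑ j, trace (F j * X) * trace (F j * Y) := by
  conv_lhs => rw [eq_sum_smul_of_mem_span_of_orthonormal horth hX]
  simp [Finset.sum_mul, trace_sum]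

theorem kronecker_self_of_mem_span_of_orthonormal
    (horth : ∀ j k, trace (F j * F k) = if j = k then (-1 : R) else 0)
    {X : Matrix n n R} (hX : X ∈ Submodule.span R (Set.range F)) :
    X ⊗ₖ X = ∑ j, ∑ k, (trace (F j * X) * trace (F k * X)) • (F j ⊗ₖ F k) := by
  conv_lhs => rw [eq_sum_smul_of_mem_span_of_orthonormal horth hX]
  have hk : ∀ A B : Matrix n n R, A ⊗ₖ B =
      (kroneckerBilinear (R := R) :
        Matrix n n R →ₗ[R] Matrix n n R →ₗ[R] Matrix (n × n) (n × n) R) A B := fun _ _ => rfl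
  simp only [hk, map_sum, map_neg, map_smul, LinearMap.sum_apply, LinearMap.neg_apply,
    LinearMap.smul_apply, Finset.smul_sum, smul_smul, neg_smul, smul_neg,
    Finset.sum_neg_distrib, neg_neg]
  rw [Finset.sum_comm]
  simp only [mul_comm]

end Orthonormal

theorem exists_eq_smul_of_commute_of_irreducible {ι K E : Type*} [Field K] [IsAlgClosed K]
    [AddCommGroup E] [Module K E] (act : ι → E →ₗ[K] E) (V : Submodule K E)
    [FiniteDimensional K V] [Nontrivial V] (hV : ∀ i, ∀ x ∈ V, act i x ∈ V)
    (hirr : ∀ W : Submodule K E, W ≤ V → (∀ i, ∀ x ∈ W, act i x ∈ W) → W = ⊥ ∨ W = V)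
    (T : E →ₗ[K] E) (hTV : ∀ x ∈ V, T x ∈ V) (hT : ∀ i x, T (act i x) = act i (T x)) :
    ∃ c : K, ∀ x ∈ V, T x = c • x := by
  obtain ⟨c, hc⟩ := Module.End.exists_eigenvalue (T.restrict hTV)
  obtain ⟨v, hv⟩ := hc.exists_hasEigenvector
  set W := V ⊓ LinearMap.ker (T - c • LinearMap.id)
  have hmemW : ∀ x, x ∈ W ↔ x ∈ V ∧ T x = c • x := by
    intro x
    simp [W, sub_eq_zero]
  have hWV : W = V := by
    refine (hirr W inf_le_left fun i x hx => ?_).resolve_left fun hW => hv.2 ?_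
    · rw [hmemW] at hx ⊢
      exact ⟨hV i x hx.1, by rw [hT, hx.2, map_smul]⟩
    · have hvW : (v : E) ∈ W := (hmemW v).2 ⟨v.2, congrArg Subtype.val hv.apply_eq_smul⟩
      rw [hW, Submodule.mem_bot] at hvW
      exact Subtype.ext hvW
  exact ⟨c, fun x hx => ((hmemW x).1 (hWV ▸ hx)).2⟩

section ConjRep

variable {G n R : Type*} [Group G] [Fintype n] [DecidableEq n] [CommRing R]

def conjRep (ρ : G →* Matrix n n R) : Representation R G (Matrix n n R) where
  toFun g := (LinearMap.mulRight R (ρ g⁻¹)).comp (LinearMap.mulLeft R (ρ g))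
  map_one' := by ext : 1; simp
  map_mul' g h := by ext : 1; simp [mul_assoc]

variable (ρ : G →* Matrix n n R)

@[simp]
theorem conjRep_apply (g : G) (X : Matrix n n R) : conjRep ρ g X = ρ g * X * ρ g⁻¹ := rfl

theorem conjRep_mul_conjRep (g : G) (X Y : Matrix n n R) :
    conjRep ρ g X * conjRep ρ g Y = conjRep ρ g (X * Y) := by
  simp only [conjRep_apply, mul_assoc, ← mul_assoc (ρ g⁻¹), ← map_mul, inv_mul_cancel, map_one,
    one_mul]

theorem trace_conjRep (g : G) (X : Matrix n n R) : trace (conjRep ρ g X) = trace X := by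
  rw [conjRep_apply, trace_mul_cycle, ← map_mul, inv_mul_cancel, map_one, one_mul]

end ConjRep

section FrameOperator

variable {G n 𝕜 : Type*} [TopologicalSpace G] [CompactSpace G] [MeasurableSpace G]
  [BorelSpace G] [Fintype n] [RCLike 𝕜] (μ : Measure G) [IsFiniteMeasure μ]

theorem Continuous.integrable_of_compactSpace {E : Type*} [NormedAddCommGroup E] {f : G → E}
    (hf : Continuous f) : Integrable f μ :=
  hf.integrable_of_hasCompactSupport (HasCompactSupport.of_compactSpace f)

noncomputable def frameOperator (c : C(G, Matrix n n 𝕜)) : Matrix n n 𝕜 →ₗ[𝕜] Matrix n n 𝕜 where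
  toFun Z := ∫ g, -trace (c g * Z) • c g ∂μ
  map_add' X Y := by
    simp only [mul_add, trace_add, neg_add, add_smul]
    exact integral_add ((by fun_prop : Continuous _).integrable_of_compactSpace μ)
      ((by fun_prop : Continuous _).integrable_of_compactSpace μ)
  map_smul' a X := by
    simp only [Matrix.mul_smul, trace_smul, smul_eq_mul, ← mul_neg, mul_smul, integral_smul,
      RingHom.id_apply]

variable (c : C(G, Matrix n n 𝕜))

theorem frameOperator_apply (Z : Matrix n n 𝕜) :
    frameOperator μ c Z = ∫ g, -trace (c g * Z) • c g ∂μ := rfl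

theorem frameOperator_mem [IsProbabilityMeasure μ] {V : Submodule 𝕜 (Matrix n n 𝕜)}
    (hc : ∀ g, c g ∈ V) (Z : Matrix n n 𝕜) : frameOperator μ c Z ∈ V :=
  Convex.integral_mem (V.restrictScalars ℝ).convex (V.closed_of_finiteDimensional)
    (ae_of_all _ fun g => V.smul_mem _ (hc g))
    ((by fun_prop : Continuous _).integrable_of_compactSpace μ)

theorem trace_mul_frameOperator (M Z : Matrix n n 𝕜) :
    trace (M * frameOperator μ c Z) = ∫ g, -trace (c g * Z) * trace (M * c g) ∂μ := by
  let L := ((traceLinearMap n 𝕜 𝕜).comp (LinearMap.mulLeft 𝕜 M)).toContinuousLinearMap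
  have key : ∫ g, trace (M * (-trace (c g * Z) • c g)) ∂μ
      = trace (M * ∫ g, -trace (c g * Z) • c g ∂μ) :=
    L.integral_comp_comm ((by fun_prop : Continuous _).integrable_of_compactSpace μ)
  rw [frameOperator_apply, ← key]
  simp [Matrix.mul_smul, trace_smul]

theorem frameOperator_conjRep [Group G] [MeasurableMul G] [DecidableEq n] [μ.IsMulLeftInvariant]
    (ρ : G →* Matrix n n 𝕜) (hc : ∀ h g, c (h * g) = conjRep ρ h (c g)) (h : G) (Z : Matrix n n 𝕜) :
    frameOperator μ c (conjRep ρ h Z) = conjRep ρ h (frameOperator μ c Z) := by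
  calc frameOperator μ c (conjRep ρ h Z)
      = ∫ g, -trace (c (h * g) * conjRep ρ h Z) • c (h * g) ∂μ :=
        (integral_mul_left_eq_self _ h).symm
    _ = ∫ g, conjRep ρ h (-trace (c g * Z) • c g) ∂μ := by
        simp only [hc, conjRep_mul_conjRep, trace_conjRep, map_smul]
    _ = conjRep ρ h (frameOperator μ c Z) :=
        (conjRep ρ h).toContinuousLinearMap.integral_comp_comm
          ((by fun_prop : Continuous _).integrable_of_compactSpace μ)

end FrameOperator

section Gram

variable {G n ι : Type*} [TopologicalSpace G] [CompactSpace G] [MeasurableSpace G]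
  [BorelSpace G] [Fintype n] [DecidableEq ι] {μ : Measure G}
  [IsFiniteMeasure μ] {c : C(G, Matrix n n ℂ)} {F : ι → Matrix n n ℂ}
  (horth : ∀ j k, trace (F j * F k) = if j = k then (-1 : ℂ) else 0) {a : ℂ}
include horth

theorem integral_trace_mul_trace_of_frameOperator_eq_smul
    (h : ∀ k, frameOperator μ c (F k) = a • F k) (j k : ι) :
    ∫ g, trace (F j * c g) * trace (F k * c g) ∂μ = if j = k then a else 0 := by
  have := trace_mul_frameOperator μ c (F j) (F k)
  rw [h k, Matrix.mul_smul, trace_smul, horth] at this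
  simp only [trace_mul_comm (c _) (F k), neg_mul, integral_neg, mul_comm (trace (F k * _))]
    at this
  split_ifs at this ⊢ <;> simp_all

variable [Fintype ι] (hcV : ∀ g, c g ∈ Submodule.span ℂ (Set.range F))
  (hgram : ∀ j k, ∫ g, trace (F j * c g) * trace (F k * c g) ∂μ = if j = k then a else 0)
include hcV hgram

theorem integral_kronecker_self_eq_smul :
    ∫ g, c g ⊗ₖ c g ∂μ = a • ∑ j, F j ⊗ₖ F j := by
  have hcont : ∀ j k,
      Continuous fun g => (trace (F j * c g) * trace (F k * c g)) • (F j ⊗ₖ F k) :=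
    fun j k => by fun_prop
  calc ∫ g, c g ⊗ₖ c g ∂μ
      = ∫ g, ∑ j, ∑ k, (trace (F j * c g) * trace (F k * c g)) • (F j ⊗ₖ F k) ∂μ :=
        integral_congr_ae (ae_of_all _ fun g =>
          kronecker_self_of_mem_span_of_orthonormal horth (hcV g))
    _ = ∑ j, ∑ k, (if j = k then a else 0) • (F j ⊗ₖ F k) := by
        rw [integral_finsetSum _ fun j _ => integrable_finsetSum _ fun k _ =>
          (hcont j k).integrable_of_compactSpace μ]
        refine Finset.sum_congr rfl fun j _ => ?_
        rw [integral_finsetSum _ fun k _ => (hcont j k).integrable_of_compactSpace μ]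
        refine Finset.sum_congr rfl fun k _ => ?_
        rw [integral_smul_const, hgram]
    _ = a • ∑ j, F j ⊗ₖ F j := by simp [ite_smul, Finset.smul_sum]

theorem card_mul_eq_integral_neg_trace_mul_self :
    (Fintype.card ι : ℂ) * a = ∫ g, -trace (c g * c g) ∂μ := by
  calc (Fintype.card ι : ℂ) * a = ∑ j, ∫ g, trace (F j * c g) * trace (F j * c g) ∂μ := by
        simp [hgram]
    _ = ∫ g, -trace (c g * c g) ∂μ := by
        rw [← integral_finsetSum _ fun j _ =>
          (by fun_prop : Continuous _).integrable_of_compactSpace μ]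
        simp only [trace_mul_of_mem_span_of_orthonormal horth (hcV _), neg_neg]

end Gram

theorem stmt_0_general
    {G : Type} [Group G] [TopologicalSpace G] [IsTopologicalGroup G] [CompactSpace G]
    [MeasurableSpace G] [BorelSpace G]
    (μ : Measure G) [μ.IsHaarMeasure] [IsProbabilityMeasure μ]
    {N d : ℕ} (hd : 1 ≤ d)
    (φ : G →* Matrix.unitaryGroup (Fin N) ℂ)
    (hcont : Continuous fun g => (φ g : Matrix (Fin N) (Fin N) ℂ))
    (F : Fin d → Matrix (Fin N) (Fin N) ℂ)
    (horth : ∀ j k, Matrix.trace (F j * F k) = if j = k then (-1 : ℂ) else 0)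
    (hconj : ∀ g : G, ∀ X ∈ Submodule.span ℝ (Set.range F),
      (φ g : Matrix (Fin N) (Fin N) ℂ) * X * (φ g⁻¹ : Matrix (Fin N) (Fin N) ℂ) ∈
        Submodule.span ℝ (Set.range F))
    (hirr : ∀ W : Submodule ℂ (Matrix (Fin N) (Fin N) ℂ),
      W ≤ Submodule.span ℂ (Set.range F) →
      (∀ g : G, ∀ X ∈ W,
        (φ g : Matrix (Fin N) (Fin N) ℂ) * X * (φ g⁻¹ : Matrix (Fin N) (Fin N) ℂ) ∈ W) →
      W = ⊥ ∨ W = Submodule.span ℂ (Set.range F))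
    (A : Matrix (Fin N) (Fin N) ℂ) (hA : A ∈ Submodule.span ℝ (Set.range F)) :
    (∫ g, ((φ g : Matrix (Fin N) (Fin N) ℂ) * A * (φ g⁻¹ : Matrix (Fin N) (Fin N) ℂ)) ⊗ₖ
        ((φ g : Matrix (Fin N) (Fin N) ℂ) * A * (φ g⁻¹ : Matrix (Fin N) (Fin N) ℂ)) ∂μ)
      = ((-(Matrix.trace (A * A))) / (d : ℂ)) • ∑ j, F j ⊗ₖ F j := by
  set V := Submodule.span ℂ (Set.range F)
  let ρ := (unitary (Matrix (Fin N) (Fin N) ℂ)).subtype.comp φ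
  let c : C(G, Matrix (Fin N) (Fin N) ℂ) :=
    ⟨fun g => conjRep ρ g A, (hcont.matrix_mul continuous_const).matrix_mul
      (hcont.comp continuous_inv)⟩
  have hVconj : ∀ g, ∀ X ∈ V, conjRep ρ g X ∈ V := fun g =>
    show V ≤ V.comap (conjRep ρ g) from Submodule.span_le.mpr (Set.range_subset_iff.mpr fun k =>
      Submodule.span_subset_span ℝ ℂ _ (hconj g _ (Submodule.subset_span ⟨k, rfl⟩)))
  have hcV : ∀ g, c g ∈ V := fun g => Submodule.span_subset_span ℝ ℂ _ (hconj g A hA)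
  have : Nontrivial V := by
    refine Submodule.nontrivial_iff_ne_bot.mpr fun hbot => ?_
    have h0 : F ⟨0, hd⟩ ∈ V := Submodule.subset_span ⟨_, rfl⟩
    rw [hbot, Submodule.mem_bot] at h0
    simpa [h0] using horth ⟨0, hd⟩ ⟨0, hd⟩
  obtain ⟨a, ha⟩ := exists_eq_smul_of_commute_of_irreducible (conjRep ρ) V hVconj hirr
    (frameOperator μ c) (fun Z _ => frameOperator_mem μ c hcV Z)
    (frameOperator_conjRep μ c ρ fun h g => by simp [c, mul_assoc])
  have hgram := integral_trace_mul_trace_of_frameOperator_eq_smul horth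
    fun k => ha _ (Submodule.subset_span ⟨k, rfl⟩)
  have hda := card_mul_eq_integral_neg_trace_mul_self horth hcV hgram
  have htr : ∀ g, trace (c g * c g) = trace (A * A) := fun g => by
    rw [show c g = conjRep ρ g A from rfl, conjRep_mul_conjRep, trace_conjRep]
  simp only [htr, integral_const, probReal_univ, one_smul, Fintype.card_fin] at hda
  change ∫ g, c g ⊗ₖ c g ∂μ = _
  rw [integral_kronecker_self_eq_smul horth hcV hgram, ← hda,
    mul_div_cancel_left₀ _ (Nat.cast_ne_zero.mpr (by omega))]

/-- For a compact group `G` with normalized Haar measure `μ`, a continuous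
unitary representation `φ : G → U(N)`, and a Frobenius-orthonormal family `F₁, …, F_d` of
skew-Hermitian matrices spanning `𝔪 = span_ℝ {F_j}` which is a Lie algebra, invariant under
conjugation by `φ(g)`, and whose complexification is an irreducible `G`-module under
conjugation: for every `A ∈ 𝔪`,
`∫_G (φ(g) A φ(g)⁻¹) ⊗ (φ(g) A φ(g)⁻¹) dμ(g) = (‖A‖_F² / d) • K`,
where `K = ∑_j F_j ⊗ F_j` is the split Casimir and `‖A‖_F² = −Tr(A²)`. -/
theorem stmt_0
    {G : Type} [Group G] [TopologicalSpace G] [IsTopologicalGroup G] [CompactSpace G]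
    [MeasurableSpace G] [BorelSpace G]
    (μ : Measure G) [μ.IsHaarMeasure] [IsProbabilityMeasure μ]
    {N d : ℕ} (hN : 1 ≤ N) (hd : 1 ≤ d)
    (φ : G →* Matrix.unitaryGroup (Fin N) ℂ)
    (hcont : Continuous fun g => (φ g : Matrix (Fin N) (Fin N) ℂ))
    (F : Fin d → Matrix (Fin N) (Fin N) ℂ)
    (hskew : ∀ j, (F j)ᴴ = -(F j))
    (horth : ∀ j k, Matrix.trace (F j * F k) = if j = k then (-1 : ℂ) else 0)
    (hLie : ∀ X ∈ Submodule.span ℝ (Set.range F), ∀ Y ∈ Submodule.span ℝ (Set.range F),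
      ⁅X, Y⁆ ∈ Submodule.span ℝ (Set.range F))
    (hconj : ∀ g : G, ∀ X ∈ Submodule.span ℝ (Set.range F),
      (φ g : Matrix (Fin N) (Fin N) ℂ) * X * (φ g⁻¹ : Matrix (Fin N) (Fin N) ℂ) ∈
        Submodule.span ℝ (Set.range F))
    (hirr : ∀ W : Submodule ℂ (Matrix (Fin N) (Fin N) ℂ),
      W ≤ Submodule.span ℂ (Set.range F) →
      (∀ g : G, ∀ X ∈ W,
        (φ g : Matrix (Fin N) (Fin N) ℂ) * X * (φ g⁻¹ : Matrix (Fin N) (Fin N) ℂ) ∈ W) →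
      W = ⊥ ∨ W = Submodule.span ℂ (Set.range F))
    (A : Matrix (Fin N) (Fin N) ℂ) (hA : A ∈ Submodule.span ℝ (Set.range F)) :
    (∫ g, ((φ g : Matrix (Fin N) (Fin N) ℂ) * A * (φ g⁻¹ : Matrix (Fin N) (Fin N) ℂ)) ⊗ₖ
        ((φ g : Matrix (Fin N) (Fin N) ℂ) * A * (φ g⁻¹ : Matrix (Fin N) (Fin N) ℂ)) ∂μ)
      = ((-(Matrix.trace (A * A))) / (d : ℂ)) • ∑ j, F j ⊗ₖ F j :=
  stmt_0_general μ hd φ hcont F horth hconj hirr A hA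
end

section
/- Let A ∈ 𝔪 = (⊕_α 𝔪_α) ⊕ 𝔠, with components A_α ∈ 𝔪_α and A_𝔠 ∈ 𝔠. Then ∫_G (φ(g) A φ(g)⁻¹) ⊗ (φ(g) A φ(g)⁻¹) dμ(g) = Σ_{α=1}^m (‖A_α‖_F² / d_α) · K_α + A_𝔠 ⊗ A_𝔠, where ⊗ denotes the Kronecker product of N×N matrices. -/
/-!
Write `ρ g X = φ(g) X φ(g)⁻¹` and let `M X = ∫ tr (ρ g A · X) • ρ g A dμ(g)`. Expanding `ρ g A` in
the orthonormal basis `{E i} = {F α j} ∪ {C l}` of `𝔪` gives `∫ ρ g A ⊗ ρ g A = -∑ i, E i ⊗ M (E i)`,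
and left invariance of `μ` makes `M` commute with every `ρ g`.

The average `∫ ρ g A` is `ρ`-fixed, so its `𝔪_α`-components vanish and it equals `A_𝔠`; as the
`C l`-coordinates of `ρ g A` are constant, `M (C l) = tr (A C l) • A_𝔠`. On `𝔪_α`, the
`𝔪_β`-component of `M` is an intertwiner, hence zero for `β ≠ α` and a scalar `c_α` for `β = α`
(Schur), while the `𝔠`-component vanishes because `(X, Y) ↦ tr (M X · Y)` is symmetric. Finally
`∑ j, tr (ρ g A · F α j)² = -tr (A_α²)` does not depend on `g`, and summing `tr (M (F α j) · F α j)`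
over `j` gives `c_α d_α = -‖A_α‖²`.
-/

open MeasureTheory Matrix
open scoped Kronecker

attribute [local instance] Matrix.normedAddCommGroup Matrix.normedSpace

theorem exists_eq_smul_of_commute_on_irreducible {K V ι F : Type*} [Field K] [IsAlgClosed K]
    [AddCommGroup V] [Module K V] [FiniteDimensional K V] [FunLike F V V] [LinearMapClass F K V V]
    (ρ : ι → F) {W : Submodule K V} (hρW : ∀ i, ∀ X ∈ W, ρ i X ∈ W)
    (hW : ∀ W' ≤ W, (∀ i, ∀ X ∈ W', ρ i X ∈ W') → W' = ⊥ ∨ W' = W)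
    (T : V →ₗ[K] V) (hTW : ∀ X ∈ W, T X ∈ W) (hTρ : ∀ i, ∀ X ∈ W, T (ρ i X) = ρ i (T X)) :
    ∃ c : K, ∀ X ∈ W, T X = c • X := by
  rcases subsingleton_or_nontrivial W with hsub | hnontriv
  · refine ⟨0, fun X hX => ?_⟩
    have : X = 0 := by simpa using congrArg Subtype.val (Subsingleton.elim (⟨X, hX⟩ : W) 0)
    simp [this]
  obtain ⟨c, hc⟩ := Module.End.exists_eigenvalue (T.restrict hTW)
  obtain ⟨v, hv⟩ := hc.exists_hasEigenvector
  let E : Submodule K V := W ⊓ LinearMap.ker (T - c • LinearMap.id)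
  have hE_inv : ∀ i, ∀ X ∈ E, ρ i X ∈ E := by
    rintro i X ⟨hXW, hXker⟩
    simp only [SetLike.mem_coe, LinearMap.mem_ker, LinearMap.sub_apply, LinearMap.smul_apply,
      LinearMap.id_apply, sub_eq_zero] at hXker
    refine ⟨hρW i X hXW, ?_⟩
    simp [hTρ i X hXW, hXker]
  have hvE : (v : V) ∈ E := by
    refine ⟨v.2, ?_⟩
    have := congrArg Subtype.val hv.apply_eq_smul
    simpa [sub_eq_zero] using this
  rcases hW E inf_le_left hE_inv with hbot | htop
  · rw [hbot, Submodule.mem_bot] at hvE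
    exact absurd (Subtype.ext hvE) hv.2
  · refine ⟨c, fun X hX => ?_⟩
    have hXE : X ∈ E := htop ▸ hX
    simpa [sub_eq_zero] using hXE.2

section TraceOrthonormal

variable {n ι : Type*} [Fintype n]

def traceForm (B : Matrix n n ℂ) : Matrix n n ℂ →ₗ[ℂ] ℂ :=
  traceLinearMap n ℂ ℂ ∘ₗ LinearMap.mulRight ℂ B

@[simp] theorem traceForm_apply (B X : Matrix n n ℂ) : traceForm B X = trace (X * B) := rfl

theorem trace_mul_eq_zero_of_mem_span {E : ι → Matrix n n ℂ} {B X : Matrix n n ℂ}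
    (h : ∀ i, trace (E i * B) = 0) (hX : X ∈ Submodule.span ℂ (Set.range E)) :
    trace (X * B) = 0 := by
  have : Submodule.span ℂ (Set.range E) ≤ LinearMap.ker (traceForm B) :=
    Submodule.span_le.2 (by rintro _ ⟨i, rfl⟩; exact h i)
  exact this hX

variable [Fintype ι]

/-- Orthonormality for the Frobenius form `⟨X, Y⟩ = -tr (X Y)` of skew-Hermitian matrices. -/
def IsTraceOrthonormal [DecidableEq ι] (E : ι → Matrix n n ℂ) : Prop :=
  ∀ i j, trace (E i * E j) = if i = j then -1 else 0

def traceProj (E : ι → Matrix n n ℂ) : Matrix n n ℂ →ₗ[ℂ] Matrix n n ℂ :=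
  ∑ i, (traceForm (E i)).smulRight (-E i)

theorem traceProj_apply (E : ι → Matrix n n ℂ) (X : Matrix n n ℂ) :
    traceProj E X = ∑ i, (-trace (X * E i)) • E i := by
  simp [traceProj, neg_smul, smul_neg]

theorem traceProj_mem_span (E : ι → Matrix n n ℂ) (X : Matrix n n ℂ) :
    traceProj E X ∈ Submodule.span ℂ (Set.range E) := by
  rw [traceProj_apply]
  exact Submodule.sum_mem _ fun i _ => Submodule.smul_mem _ _ (Submodule.subset_span ⟨i, rfl⟩)

variable [DecidableEq ι] {E : ι → Matrix n n ℂ}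

theorem IsTraceOrthonormal.trace_sum_smul_mul (hE : IsTraceOrthonormal E) (x : ι → ℂ) (j : ι) :
    trace ((∑ i, x i • E i) * E j) = -x j := by
  simp [Finset.sum_mul, trace_sum, hE _ j]

theorem IsTraceOrthonormal.trace_traceProj_mul (hE : IsTraceOrthonormal E) (X : Matrix n n ℂ)
    (j : ι) : trace (traceProj E X * E j) = trace (X * E j) := by
  rw [traceProj_apply, hE.trace_sum_smul_mul, neg_neg]

theorem IsTraceOrthonormal.traceProj_eq_self (hE : IsTraceOrthonormal E) {X : Matrix n n ℂ}
    (hX : X ∈ Submodule.span ℂ (Set.range E)) : traceProj E X = X := by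
  have : Submodule.span ℂ (Set.range E) ≤ LinearMap.ker (traceProj E - LinearMap.id) := by
    refine Submodule.span_le.2 ?_
    rintro _ ⟨i, rfl⟩
    simp [traceProj_apply, hE i, ite_smul]
  simpa [sub_eq_zero] using this hX

theorem IsTraceOrthonormal.traceProj_eq_zero_iff (hE : IsTraceOrthonormal E)
    {X : Matrix n n ℂ} : traceProj E X = 0 ↔ ∀ i, trace (X * E i) = 0 := by
  refine ⟨fun h i => ?_, fun h => by simp [traceProj_apply, h]⟩
  rw [← hE.trace_traceProj_mul, h, Matrix.zero_mul, trace_zero]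

theorem IsTraceOrthonormal.trace_traceProj_mul_self (hE : IsTraceOrthonormal E)
    (X : Matrix n n ℂ) :
    trace (traceProj E X * traceProj E X) = -∑ i, trace (X * E i) ^ 2 := by
  nth_rw 1 [traceProj_apply]
  simp only [Finset.sum_mul, trace_sum, smul_mul_assoc, trace_smul, trace_mul_comm (E _),
    hE.trace_traceProj_mul, smul_eq_mul, neg_mul, Finset.sum_neg_distrib, sq]

end TraceOrthonormal

section Conjugation

variable {G n : Type*} [Group G] [Fintype n] [DecidableEq n] (φ : G →* unitaryGroup n ℂ)

def conjAut : G →* (Matrix n n ℂ ≃⋆ₐ[ℂ] Matrix n n ℂ) :=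
  (Unitary.conjStarAlgAut ℂ (Matrix n n ℂ)).comp φ

theorem conjAut_apply (g : G) (X : Matrix n n ℂ) :
    conjAut φ g X = (φ g : Matrix n n ℂ) * X * (φ g⁻¹ : Matrix n n ℂ) := by
  simp [conjAut, map_inv]

theorem coe_map_inv_mul_coe (g : G) : (φ g⁻¹ : Matrix n n ℂ) * φ g = 1 := by
  rw [← Submonoid.coe_mul, ← map_mul, inv_mul_cancel, map_one, OneMemClass.coe_one]

theorem coe_mul_coe_map_inv (g : G) : (φ g : Matrix n n ℂ) * φ g⁻¹ = 1 := by
  rw [← coe_map_inv_mul_coe φ g⁻¹, inv_inv]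

theorem conjAut_conjAut_inv (g : G) (X : Matrix n n ℂ) : conjAut φ g (conjAut φ g⁻¹ X) = X := by
  rw [← StarAlgEquiv.mul_apply, ← map_mul, mul_inv_cancel, map_one, StarAlgEquiv.one_apply]

theorem trace_conjAut (g : G) (X : Matrix n n ℂ) : trace (conjAut φ g X) = trace X := by
  rw [conjAut_apply, trace_mul_cycle, coe_map_inv_mul_coe, Matrix.one_mul]

theorem trace_conjAut_mul (g : G) (X Y : Matrix n n ℂ) :
    trace (conjAut φ g X * Y) = trace (X * conjAut φ g⁻¹ Y) := by
  conv_lhs => rw [← conjAut_conjAut_inv φ g Y, ← map_mul, trace_conjAut]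

theorem conjAut_eq_self_iff (g : G) (X : Matrix n n ℂ) :
    conjAut φ g X = X ↔ (φ g : Matrix n n ℂ) * X = X * φ g := by
  constructor
  · intro h
    calc (φ g : Matrix n n ℂ) * X = φ g * X * (φ g⁻¹ * φ g) := by
          rw [coe_map_inv_mul_coe, Matrix.mul_one]
      _ = conjAut φ g X * φ g := by rw [conjAut_apply]; simp only [Matrix.mul_assoc]
      _ = X * φ g := by rw [h]
  · intro h
    rw [conjAut_apply, h, Matrix.mul_assoc, coe_mul_coe_map_inv, Matrix.mul_one]

theorem conjAut_mem_span_of_real {ι : Type*} {E : ι → Matrix n n ℂ} (g : G)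
    (hE : ∀ X ∈ Submodule.span ℝ (Set.range E),
      (φ g : Matrix n n ℂ) * X * (φ g⁻¹ : Matrix n n ℂ) ∈ Submodule.span ℝ (Set.range E))
    {X : Matrix n n ℂ} (hX : X ∈ Submodule.span ℂ (Set.range E)) :
    conjAut φ g X ∈ Submodule.span ℂ (Set.range E) := by
  have : Submodule.span ℂ (Set.range E) ≤
      (Submodule.span ℂ (Set.range E)).comap (conjAut φ g).toAlgEquiv.toLinearMap := by
    refine Submodule.span_le.2 ?_
    rintro _ ⟨i, rfl⟩
    have := hE (E i) (Submodule.subset_span ⟨i, rfl⟩)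
    rw [← conjAut_apply] at this
    exact Submodule.span_le_restrictScalars ℝ ℂ _ this
  exact this hX

def IsConjIrreducible (W : Submodule ℂ (Matrix n n ℂ)) : Prop :=
  ∀ W' ≤ W, (∀ g, ∀ X ∈ W', conjAut φ g X ∈ W') → W' = ⊥ ∨ W' = W

def HasNoConjFixedPoint (W : Submodule ℂ (Matrix n n ℂ)) : Prop :=
  ∀ X ∈ W, (∀ g, conjAut φ g X = X) → X = 0

def ConjIntertwinersVanish (W W' : Submodule ℂ (Matrix n n ℂ)) : Prop :=
  ∀ T : Matrix n n ℂ →ₗ[ℂ] Matrix n n ℂ, (∀ X ∈ W, T X ∈ W') →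
    (∀ g, ∀ X ∈ W, T (conjAut φ g X) = conjAut φ g (T X)) → ∀ X ∈ W, T X = 0

end Conjugation

section Integral

-- The normed structure on matrices carries the product topology only up to unfolding, which
-- instance search does not see.
noncomputable instance Matrix.continuousENorm {m n : Type*} [Fintype m] [Fintype n] :
    ContinuousENorm (Matrix m n ℂ) :=
  SeminormedAddGroup.toContinuousENorm

variable {X : Type*} [MeasurableSpace X] {μ : Measure X} {n : Type*} [Fintype n]

theorem integral_trace_mul {f : X → Matrix n n ℂ} (hf : Integrable f μ) (B : Matrix n n ℂ) :
    ∫ x, trace (f x * B) ∂μ = trace ((∫ x, f x ∂μ) * B) :=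
  (traceForm B).toContinuousLinearMap.integral_comp_comm hf

theorem sum_kronecker {ι l m p q : Type*} (s : Finset ι) (Y : ι → Matrix l m ℂ)
    (Z : Matrix p q ℂ) : (∑ i ∈ s, Y i) ⊗ₖ Z = ∑ i ∈ s, Y i ⊗ₖ Z :=
  LinearMap.map_sum₂ (kroneckerBilinear (R := ℂ)) s Y Z

theorem MeasureTheory.Integrable.kronecker_left {m : Type*} [Fintype m] {f : X → Matrix n n ℂ}
    (hf : Integrable f μ) (B : Matrix m m ℂ) : Integrable (fun x => B ⊗ₖ f x) μ :=
  (kroneckerBilinear (R := ℂ) B).toContinuousLinearMap.integrable_comp hf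

theorem integral_kronecker_left {m : Type*} [Fintype m] {f : X → Matrix n n ℂ}
    (hf : Integrable f μ) (B : Matrix m m ℂ) :
    ∫ x, B ⊗ₖ f x ∂μ = B ⊗ₖ ∫ x, f x ∂μ :=
  (kroneckerBilinear (R := ℂ) B).toContinuousLinearMap.integral_comp_comm hf

theorem integral_mem_of_forall_mem [IsProbabilityMeasure μ] {W : Submodule ℂ (Matrix n n ℂ)}
    {f : X → Matrix n n ℂ} (hf : ∀ x, f x ∈ W) (hint : Integrable f μ) :
    ∫ x, f x ∂μ ∈ W :=
  (W.restrictScalars ℝ).convex.integral_mem W.closed_of_finiteDimensional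
    (Filter.Eventually.of_forall hf) hint

end Integral

section HaarAverage

variable {G n : Type*} [Group G] [Fintype n] [DecidableEq n] {φ : G →* unitaryGroup n ℂ}

theorem continuous_conjAut_apply [TopologicalSpace G] [IsTopologicalGroup G]
    (hcont : Continuous fun g => (φ g : Matrix n n ℂ)) (X : Matrix n n ℂ) :
    Continuous fun g => conjAut φ g X := by
  simp only [conjAut_apply]
  exact (hcont.matrix_mul continuous_const).matrix_mul (hcont.comp continuous_inv)

variable [MeasurableSpace G] (μ : Measure G)

theorem conjAut_integral (h : G) (f : G → Matrix n n ℂ) :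
    conjAut φ h (∫ g, f g ∂μ) = ∫ g, conjAut φ h (f g) ∂μ :=
  ((conjAut φ h).toAlgEquiv.toLinearEquiv.toContinuousLinearEquiv.integral_comp_comm f).symm

theorem conjAut_integral_conjAut [MeasurableMul G] [μ.IsMulLeftInvariant] (h : G)
    (A : Matrix n n ℂ) : conjAut φ h (∫ g, conjAut φ g A ∂μ) = ∫ g, conjAut φ g A ∂μ := by
  rw [conjAut_integral]
  simp_rw [← StarAlgEquiv.mul_apply, ← map_mul]
  exact integral_mul_left_eq_self (fun g => conjAut φ g A) h

variable [TopologicalSpace G] [IsTopologicalGroup G] [CompactSpace G] [BorelSpace G]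
  [IsFiniteMeasure μ]

theorem integrable_conjAut_apply (hcont : Continuous fun g => (φ g : Matrix n n ℂ))
    (A : Matrix n n ℂ) : Integrable (fun g => conjAut φ g A) μ :=
  (continuous_conjAut_apply hcont A).integrable_of_hasCompactSupport (.of_compactSpace _)

theorem integrable_trace_mul_smul_conjAut (hcont : Continuous fun g => (φ g : Matrix n n ℂ))
    (A X : Matrix n n ℂ) :
    Integrable (fun g => trace (conjAut φ g A * X) • conjAut φ g A) μ :=
  (((continuous_conjAut_apply hcont A).matrix_mul continuous_const).matrix_trace.smul
    (continuous_conjAut_apply hcont A)).integrable_of_hasCompactSupport (.of_compactSpace _)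

noncomputable def secondMoment (hcont : Continuous fun g => (φ g : Matrix n n ℂ))
    (A : Matrix n n ℂ) : Matrix n n ℂ →ₗ[ℂ] Matrix n n ℂ where
  toFun X := ∫ g, trace (conjAut φ g A * X) • conjAut φ g A ∂μ
  map_add' X Y := by
    simp only [Matrix.mul_add, trace_add, add_smul]
    exact integral_add (integrable_trace_mul_smul_conjAut μ hcont A X)
      (integrable_trace_mul_smul_conjAut μ hcont A Y)
  map_smul' c X := by
    simp only [mul_smul_comm, trace_smul, smul_eq_mul, mul_smul, RingHom.id_apply]
    exact integral_smul c _

variable {μ} (hcont : Continuous fun g => (φ g : Matrix n n ℂ)) (A : Matrix n n ℂ)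

theorem secondMoment_apply (X : Matrix n n ℂ) :
    secondMoment μ hcont A X = ∫ g, trace (conjAut φ g A * X) • conjAut φ g A ∂μ :=
  rfl

theorem trace_secondMoment_mul (X Y : Matrix n n ℂ) :
    trace (secondMoment μ hcont A X * Y) =
      ∫ g, trace (conjAut φ g A * X) * trace (conjAut φ g A * Y) ∂μ := by
  rw [secondMoment_apply, ← integral_trace_mul (integrable_trace_mul_smul_conjAut μ hcont A X)]
  simp only [smul_mul_assoc, trace_smul, smul_eq_mul]

theorem trace_secondMoment_mul_comm (X Y : Matrix n n ℂ) :
    trace (secondMoment μ hcont A X * Y) = trace (secondMoment μ hcont A Y * X) := by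
  simp only [trace_secondMoment_mul, mul_comm]

theorem secondMoment_conjAut [μ.IsMulLeftInvariant] (h : G) (X : Matrix n n ℂ) :
    secondMoment μ hcont A (conjAut φ h X) = conjAut φ h (secondMoment μ hcont A X) := by
  have htrace : ∀ g, trace (conjAut φ g A * conjAut φ h X) = trace (conjAut φ (h⁻¹ * g) A * X) := by
    intro g
    rw [← trace_conjAut φ h (conjAut φ (h⁻¹ * g) A * X), _root_.map_mul (conjAut φ h),
      ← StarAlgEquiv.mul_apply, ← _root_.map_mul (conjAut φ), mul_inv_cancel_left]
  simp only [secondMoment_apply, conjAut_integral, map_smul, ← StarAlgEquiv.mul_apply, ← map_mul,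
    htrace]
  rw [← integral_mul_left_eq_self _ h]
  simp only [inv_mul_cancel_left]

theorem integral_conjAut_kronecker_conjAut_eq_sum {ι : Type*} [Fintype ι] [DecidableEq ι]
    {E : ι → Matrix n n ℂ} (hE : IsTraceOrthonormal E)
    (hA : ∀ g, conjAut φ g A ∈ Submodule.span ℂ (Set.range E)) :
    ∫ g, conjAut φ g A ⊗ₖ conjAut φ g A ∂μ = -∑ i, E i ⊗ₖ secondMoment μ hcont A (E i) := by
  have hexpand : ∀ g, conjAut φ g A ⊗ₖ conjAut φ g A =
      -∑ i, E i ⊗ₖ (trace (conjAut φ g A * E i) • conjAut φ g A) := by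
    intro g
    nth_rw 1 [← hE.traceProj_eq_self (hA g)]
    rw [traceProj_apply, sum_kronecker, ← Finset.sum_neg_distrib]
    exact Finset.sum_congr rfl fun i _ => by rw [smul_kronecker, kronecker_smul, neg_smul]
  simp_rw [hexpand, secondMoment_apply]
  rw [integral_neg, integral_finsetSum _ fun i _ =>
    (integrable_trace_mul_smul_conjAut μ hcont A (E i)).kronecker_left (E i)]
  simp_rw [integral_kronecker_left (integrable_trace_mul_smul_conjAut μ hcont A _)]

end HaarAverage

section Decomposition

variable {n ι γ : Type*} {κ : ι → Type*}

/-- The family `{F α j} ∪ {C l}` spanning `𝔪 = (⊕ α, 𝔪_α) ⊕ 𝔠`. -/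
def fullFamily (F : (α : ι) → κ α → Matrix n n ℂ) (C : γ → Matrix n n ℂ) :
    (Σ α, κ α) ⊕ γ → Matrix n n ℂ :=
  Sum.elim (fun p => F p.1 p.2) C

theorem sum_smul_fullFamily [Fintype ι] [∀ α, Fintype (κ α)] [Fintype γ]
    (F : (α : ι) → κ α → Matrix n n ℂ) (C : γ → Matrix n n ℂ) (x : (Σ α, κ α) ⊕ γ → ℂ) :
    ∑ i, x i • fullFamily F C i =
      ∑ α, ∑ j, x (.inl ⟨α, j⟩) • F α j + ∑ l, x (.inr l) • C l := by
  simp [fullFamily, Fintype.sum_sum_type, Fintype.sum_sigma]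

theorem span_le_span_fullFamily (F : (α : ι) → κ α → Matrix n n ℂ) (C : γ → Matrix n n ℂ)
    (α : ι) :
    Submodule.span ℂ (Set.range (F α)) ≤ Submodule.span ℂ (Set.range (fullFamily F C)) :=
  Submodule.span_mono (by rintro _ ⟨j, rfl⟩; exact ⟨.inl ⟨α, j⟩, rfl⟩)

variable {G : Type*} [Group G] [Fintype n] [DecidableEq n] [∀ α, DecidableEq (κ α)]
  [DecidableEq γ]

structure IsInvariantDecomposition (φ : G →* unitaryGroup n ℂ)
    (F : (α : ι) → κ α → Matrix n n ℂ) (C : γ → Matrix n n ℂ) : Prop where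
  orthonormal : ∀ α, IsTraceOrthonormal (F α)
  trace_mul_of_ne : ∀ α β, α ≠ β → ∀ j k, trace (F α j * F β k) = 0
  trace_mul_center : ∀ α j l, trace (F α j * C l) = 0
  orthonormal_center : IsTraceOrthonormal C
  conjAut_mem : ∀ α g, ∀ X ∈ Submodule.span ℂ (Set.range (F α)),
    conjAut φ g X ∈ Submodule.span ℂ (Set.range (F α))
  conjAut_center : ∀ g l, conjAut φ g (C l) = C l

namespace IsInvariantDecomposition

variable {φ : G →* unitaryGroup n ℂ} {F : (α : ι) → κ α → Matrix n n ℂ} {C : γ → Matrix n n ℂ}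

theorem isTraceOrthonormal_fullFamily [DecidableEq ι] (hD : IsInvariantDecomposition φ F C) :
    IsTraceOrthonormal (fullFamily F C) := by
  rintro (⟨α, j⟩ | l) (⟨β, k⟩ | l')
  · by_cases hαβ : α = β
    · subst hαβ
      simp [fullFamily, hD.orthonormal α j k]
    · simp [fullFamily, hD.trace_mul_of_ne α β hαβ, hαβ]
  · simp [fullFamily, hD.trace_mul_center]
  · simp [fullFamily, trace_mul_comm, hD.trace_mul_center]
  · simp [fullFamily, hD.orthonormal_center l l']

theorem trace_mul_eq_zero_of_ne (hD : IsInvariantDecomposition φ F C) {α β : ι} (hαβ : α ≠ β)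
    {X : Matrix n n ℂ} (hX : X ∈ Submodule.span ℂ (Set.range (F β))) (k : κ α) :
    trace (X * F α k) = 0 :=
  trace_mul_eq_zero_of_mem_span (fun j => hD.trace_mul_of_ne β α (Ne.symm hαβ) j k) hX

theorem trace_mul_eq_zero_of_mem_center (hD : IsInvariantDecomposition φ F C) {α : ι}
    {X Y : Matrix n n ℂ} (hX : X ∈ Submodule.span ℂ (Set.range (F α)))
    (hY : Y ∈ Submodule.span ℂ (Set.range C)) : trace (X * Y) = 0 := by
  rw [trace_mul_comm]
  refine trace_mul_eq_zero_of_mem_span (fun l => ?_) hY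
  rw [trace_mul_comm]
  exact trace_mul_eq_zero_of_mem_span (fun j => hD.trace_mul_center α j l) hX

theorem trace_conjAut_mul_center (hD : IsInvariantDecomposition φ F C) (g : G)
    (X : Matrix n n ℂ) (l : γ) : trace (conjAut φ g X * C l) = trace (X * C l) := by
  rw [trace_conjAut_mul, hD.conjAut_center]

theorem conjAut_mem_span (hD : IsInvariantDecomposition φ F C) (g : G) {X : Matrix n n ℂ}
    (hX : X ∈ Submodule.span ℂ (Set.range (fullFamily F C))) :
    conjAut φ g X ∈ Submodule.span ℂ (Set.range (fullFamily F C)) := by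
  have : Submodule.span ℂ (Set.range (fullFamily F C)) ≤
      (Submodule.span ℂ (Set.range (fullFamily F C))).comap
        (conjAut φ g).toAlgEquiv.toLinearMap := by
    refine Submodule.span_le.2 ?_
    rintro _ ⟨⟨α, j⟩ | l, rfl⟩
    · exact span_le_span_fullFamily F C α
        (hD.conjAut_mem α g _ (Submodule.subset_span ⟨j, rfl⟩))
    · exact Submodule.subset_span ⟨.inr l, (hD.conjAut_center g l).symm⟩
  exact this hX

variable [∀ α, Fintype (κ α)]

theorem traceProj_conjAut (hD : IsInvariantDecomposition φ F C) (α : ι) (g : G)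
    {X : Matrix n n ℂ} (hX : X ∈ Submodule.span ℂ (Set.range (fullFamily F C))) :
    traceProj (F α) (conjAut φ g X) = conjAut φ g (traceProj (F α) X) := by
  have : Submodule.span ℂ (Set.range (fullFamily F C)) ≤ LinearMap.ker
      (traceProj (F α) ∘ₗ (conjAut φ g).toAlgEquiv.toLinearMap -
        (conjAut φ g).toAlgEquiv.toLinearMap ∘ₗ traceProj (F α)) := by
    refine Submodule.span_le.2 ?_
    rintro _ ⟨⟨β, j⟩ | l, rfl⟩
    · have hj : F β j ∈ Submodule.span ℂ (Set.range (F β)) := Submodule.subset_span ⟨j, rfl⟩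
      simp only [SetLike.mem_coe, LinearMap.mem_ker, LinearMap.sub_apply, LinearMap.comp_apply,
        sub_eq_zero]
      by_cases hαβ : α = β
      · subst hαβ
        simp [fullFamily, (hD.orthonormal α).traceProj_eq_self hj,
          (hD.orthonormal α).traceProj_eq_self (hD.conjAut_mem α g _ hj)]
      · simp [fullFamily, (hD.orthonormal α).traceProj_eq_zero_iff.2
          (hD.trace_mul_eq_zero_of_ne hαβ hj),
          (hD.orthonormal α).traceProj_eq_zero_iff.2
          (hD.trace_mul_eq_zero_of_ne hαβ (hD.conjAut_mem β g _ hj))]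
    · have hl : traceProj (F α) (C l) = 0 := (hD.orthonormal α).traceProj_eq_zero_iff.2
        fun k => by rw [trace_mul_comm]; exact hD.trace_mul_center α k l
      simp [fullFamily, hD.conjAut_center, hl]
  simpa [sub_eq_zero] using this hX

theorem sum_sq_trace_conjAut_mul (hD : IsInvariantDecomposition φ F C) {A : Matrix n n ℂ}
    (hA : A ∈ Submodule.span ℂ (Set.range (fullFamily F C))) (α : ι) (g : G) :
    ∑ k, trace (conjAut φ g A * F α k) ^ 2 = ∑ k, trace (A * F α k) ^ 2 := by
  rw [← neg_neg (∑ k, trace (conjAut φ g A * F α k) ^ 2), ← neg_neg (∑ k, trace (A * F α k) ^ 2),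
    ← (hD.orthonormal α).trace_traceProj_mul_self, ← (hD.orthonormal α).trace_traceProj_mul_self,
    hD.traceProj_conjAut α g hA, ← map_mul, trace_conjAut]

variable [Fintype ι] [Fintype γ]

theorem eq_sum_traceProj [DecidableEq ι] (hD : IsInvariantDecomposition φ F C) {X : Matrix n n ℂ}
    (hX : X ∈ Submodule.span ℂ (Set.range (fullFamily F C))) :
    X = ∑ α, traceProj (F α) X + traceProj C X := by
  conv_lhs => rw [← hD.isTraceOrthonormal_fullFamily.traceProj_eq_self hX]
  rw [traceProj_apply, sum_smul_fullFamily]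
  simp [traceProj_apply, fullFamily]

end IsInvariantDecomposition

end Decomposition

section Moments

variable {G n ι γ : Type*} [Group G] [TopologicalSpace G] [IsTopologicalGroup G]
  [CompactSpace G] [MeasurableSpace G] [BorelSpace G] {μ : Measure G} [IsProbabilityMeasure μ]
  [Fintype n] [DecidableEq n] {κ : ι → Type*} [∀ α, DecidableEq (κ α)] [DecidableEq γ]
  {φ : G →* unitaryGroup n ℂ} {F : (α : ι) → κ α → Matrix n n ℂ} {C : γ → Matrix n n ℂ}
  {A : Matrix n n ℂ}

namespace IsInvariantDecomposition

theorem secondMoment_mem_span (hD : IsInvariantDecomposition φ F C)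
    (hcont : Continuous fun g => (φ g : Matrix n n ℂ))
    (hA : A ∈ Submodule.span ℂ (Set.range (fullFamily F C))) (X : Matrix n n ℂ) :
    secondMoment μ hcont A X ∈ Submodule.span ℂ (Set.range (fullFamily F C)) :=
  integral_mem_of_forall_mem (fun g => Submodule.smul_mem _ _ (hD.conjAut_mem_span g hA))
    (integrable_trace_mul_smul_conjAut μ hcont A X)

variable [μ.IsMulLeftInvariant] [∀ α, Fintype (κ α)]

theorem traceProj_secondMoment_conjAut (hD : IsInvariantDecomposition φ F C)
    (hcont : Continuous fun g => (φ g : Matrix n n ℂ))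
    (hA : A ∈ Submodule.span ℂ (Set.range (fullFamily F C))) (α : ι) (g : G)
    (X : Matrix n n ℂ) :
    traceProj (F α) (secondMoment μ hcont A (conjAut φ g X)) =
      conjAut φ g (traceProj (F α) (secondMoment μ hcont A X)) := by
  rw [secondMoment_conjAut, hD.traceProj_conjAut α g (hD.secondMoment_mem_span hcont hA X)]

theorem exists_traceProj_secondMoment_eq_smul (hD : IsInvariantDecomposition φ F C)
    (hcont : Continuous fun g => (φ g : Matrix n n ℂ))
    (hirr : ∀ α, IsConjIrreducible φ (Submodule.span ℂ (Set.range (F α))))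
    (hA : A ∈ Submodule.span ℂ (Set.range (fullFamily F C))) (α : ι) :
    ∃ c : ℂ, ∀ X ∈ Submodule.span ℂ (Set.range (F α)),
      traceProj (F α) (secondMoment μ hcont A X) = c • X :=
  exists_eq_smul_of_commute_on_irreducible (fun g => conjAut φ g) (hD.conjAut_mem α) (hirr α)
    (traceProj (F α) ∘ₗ secondMoment μ hcont A) (fun _ _ => traceProj_mem_span _ _)
    fun g X _ => hD.traceProj_secondMoment_conjAut hcont hA α g X

theorem traceProj_secondMoment_of_ne (hD : IsInvariantDecomposition φ F C)
    (hcont : Continuous fun g => (φ g : Matrix n n ℂ))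
    (hnoniso : ∀ α β, α ≠ β → ConjIntertwinersVanish φ (Submodule.span ℂ (Set.range (F α)))
      (Submodule.span ℂ (Set.range (F β))))
    (hA : A ∈ Submodule.span ℂ (Set.range (fullFamily F C))) {α β : ι} (hαβ : α ≠ β)
    {X : Matrix n n ℂ} (hX : X ∈ Submodule.span ℂ (Set.range (F α))) :
    traceProj (F β) (secondMoment μ hcont A X) = 0 :=
  hnoniso α β hαβ (traceProj (F β) ∘ₗ secondMoment μ hcont A) (fun _ _ => traceProj_mem_span _ _)
    (fun g X _ => hD.traceProj_secondMoment_conjAut hcont hA β g X) X hX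

variable [Fintype ι] [DecidableEq ι] [Fintype γ]

theorem integral_conjAut_eq_traceProj (hD : IsInvariantDecomposition φ F C)
    (hcont : Continuous fun g => (φ g : Matrix n n ℂ))
    (hfix : ∀ α, HasNoConjFixedPoint φ (Submodule.span ℂ (Set.range (F α))))
    (hA : A ∈ Submodule.span ℂ (Set.range (fullFamily F C))) :
    ∫ g, conjAut φ g A ∂μ = traceProj C A := by
  have hint := integrable_conjAut_apply μ hcont A
  set Abar := ∫ g, conjAut φ g A ∂μ
  have hmem : Abar ∈ Submodule.span ℂ (Set.range (fullFamily F C)) :=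
    integral_mem_of_forall_mem (fun g => hD.conjAut_mem_span g hA) hint
  have hideal : ∀ α, traceProj (F α) Abar = 0 := fun α =>
    hfix α _ (traceProj_mem_span _ _) fun g => by
      rw [← hD.traceProj_conjAut α g hmem, conjAut_integral_conjAut]
  have hcenter : traceProj C Abar = traceProj C A := by
    simp only [traceProj_apply, Abar, ← integral_trace_mul hint, hD.trace_conjAut_mul_center,
      integral_const, probReal_univ, one_smul]
  rw [hD.eq_sum_traceProj hmem, hcenter]
  simp [hideal]

theorem secondMoment_center (hD : IsInvariantDecomposition φ F C)
    (hcont : Continuous fun g => (φ g : Matrix n n ℂ))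
    (hfix : ∀ α, HasNoConjFixedPoint φ (Submodule.span ℂ (Set.range (F α))))
    (hA : A ∈ Submodule.span ℂ (Set.range (fullFamily F C))) (l : γ) :
    secondMoment μ hcont A (C l) = trace (A * C l) • traceProj C A := by
  rw [secondMoment_apply]
  simp_rw [hD.trace_conjAut_mul_center]
  rw [integral_smul, hD.integral_conjAut_eq_traceProj hcont hfix hA]

theorem traceProj_center_secondMoment (hD : IsInvariantDecomposition φ F C)
    (hcont : Continuous fun g => (φ g : Matrix n n ℂ))
    (hfix : ∀ α, HasNoConjFixedPoint φ (Submodule.span ℂ (Set.range (F α))))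
    (hA : A ∈ Submodule.span ℂ (Set.range (fullFamily F C))) {α : ι} {X : Matrix n n ℂ}
    (hX : X ∈ Submodule.span ℂ (Set.range (F α))) :
    traceProj C (secondMoment μ hcont A X) = 0 :=
  hD.orthonormal_center.traceProj_eq_zero_iff.2 fun l => by
    rw [trace_secondMoment_mul_comm, hD.secondMoment_center hcont hfix hA, smul_mul_assoc,
      trace_smul, trace_mul_comm (traceProj C A), hD.trace_mul_eq_zero_of_mem_center hX (traceProj_mem_span _ _),
      smul_zero]

theorem exists_secondMoment_eq_smul (hD : IsInvariantDecomposition φ F C)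
    (hcont : Continuous fun g => (φ g : Matrix n n ℂ))
    (hirr : ∀ α, IsConjIrreducible φ (Submodule.span ℂ (Set.range (F α))))
    (hfix : ∀ α, HasNoConjFixedPoint φ (Submodule.span ℂ (Set.range (F α))))
    (hnoniso : ∀ α β, α ≠ β → ConjIntertwinersVanish φ (Submodule.span ℂ (Set.range (F α)))
      (Submodule.span ℂ (Set.range (F β))))
    (hA : A ∈ Submodule.span ℂ (Set.range (fullFamily F C))) (α : ι) :
    ∃ c : ℂ, ∀ X ∈ Submodule.span ℂ (Set.range (F α)), secondMoment μ hcont A X = c • X := by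
  obtain ⟨c, hc⟩ := hD.exists_traceProj_secondMoment_eq_smul (μ := μ) hcont hirr hA α
  refine ⟨c, fun X hX => ?_⟩
  rw [hD.eq_sum_traceProj (hD.secondMoment_mem_span hcont hA X),
    Finset.sum_eq_single α
      (fun β _ hβ => hD.traceProj_secondMoment_of_ne hcont hnoniso hA (Ne.symm hβ) hX)
      (by simp),
    hc X hX, hD.traceProj_center_secondMoment hcont hfix hA hX, add_zero]

theorem secondMoment_apply_eq (hD : IsInvariantDecomposition φ F C)
    (hcont : Continuous fun g => (φ g : Matrix n n ℂ))
    (hirr : ∀ α, IsConjIrreducible φ (Submodule.span ℂ (Set.range (F α))))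
    (hfix : ∀ α, HasNoConjFixedPoint φ (Submodule.span ℂ (Set.range (F α))))
    (hnoniso : ∀ α β, α ≠ β → ConjIntertwinersVanish φ (Submodule.span ℂ (Set.range (F α)))
      (Submodule.span ℂ (Set.range (F β))))
    (hA : A ∈ Submodule.span ℂ (Set.range (fullFamily F C))) (α : ι) (j : κ α) :
    secondMoment μ hcont A (F α j) =
      -((∑ k, trace (A * F α k) ^ 2) / Fintype.card (κ α)) • F α j := by
  obtain ⟨c, hc⟩ := hD.exists_secondMoment_eq_smul (μ := μ) hcont hirr hfix hnoniso hA α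
  have hmem : ∀ k, F α k ∈ Submodule.span ℂ (Set.range (F α)) :=
    fun k => Submodule.subset_span ⟨k, rfl⟩
  have htrace : ∑ k, trace (secondMoment μ hcont A (F α k) * F α k) =
      -(Fintype.card (κ α) * c) := by
    simp [hc _ (hmem _), hD.orthonormal α _ _, mul_comm]
  have hsq : ∑ k, trace (secondMoment μ hcont A (F α k) * F α k) =
      ∑ k, trace (A * F α k) ^ 2 := by
    simp_rw [trace_secondMoment_mul, ← sq]
    rw [← integral_finsetSum]
    · simp_rw [hD.sum_sq_trace_conjAut_mul hA α]
      simp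
    · exact fun k _ =>
        (((continuous_conjAut_apply hcont A).matrix_mul continuous_const).matrix_trace.pow 2
          ).integrable_of_hasCompactSupport (.of_compactSpace _)
  have : Nonempty (κ α) := ⟨j⟩
  have hcard : (Fintype.card (κ α) : ℂ) ≠ 0 := Nat.cast_ne_zero.2 Fintype.card_ne_zero
  rw [hc _ (hmem j), ← hsq, htrace, neg_div, neg_neg, mul_div_cancel_left₀ _ hcard]

theorem integral_conjAut_kronecker_conjAut (hD : IsInvariantDecomposition φ F C)
    (hcont : Continuous fun g => (φ g : Matrix n n ℂ))
    (hirr : ∀ α, IsConjIrreducible φ (Submodule.span ℂ (Set.range (F α))))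
    (hfix : ∀ α, HasNoConjFixedPoint φ (Submodule.span ℂ (Set.range (F α))))
    (hnoniso : ∀ α β, α ≠ β → ConjIntertwinersVanish φ (Submodule.span ℂ (Set.range (F α)))
      (Submodule.span ℂ (Set.range (F β))))
    (hA : A ∈ Submodule.span ℂ (Set.range (fullFamily F C))) :
    ∫ g, conjAut φ g A ⊗ₖ conjAut φ g A ∂μ =
      ∑ α, ((∑ j, trace (A * F α j) ^ 2) / Fintype.card (κ α)) • ∑ j, F α j ⊗ₖ F α j +
        traceProj C A ⊗ₖ traceProj C A := by
  rw [integral_conjAut_kronecker_conjAut_eq_sum hcont A hD.isTraceOrthonormal_fullFamily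
    (fun g => hD.conjAut_mem_span g hA), Fintype.sum_sum_type, Fintype.sum_sigma, neg_add]
  congr 1
  · simp only [fullFamily, Sum.elim_inl, hD.secondMoment_apply_eq hcont hirr hfix hnoniso hA,
      kronecker_smul, ← Finset.smul_sum]
    rw [← Finset.sum_neg_distrib]
    simp only [neg_smul, neg_neg]
  · simp only [fullFamily, Sum.elim_inr, hD.secondMoment_center hcont hfix hA, kronecker_smul]
    rw [← Finset.sum_neg_distrib]
    simp_rw [← neg_smul, ← smul_kronecker]
    rw [← sum_kronecker, ← traceProj_apply]

end IsInvariantDecomposition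

end Moments

theorem stmt_2_general
    {G : Type} [Group G] [TopologicalSpace G] [IsTopologicalGroup G] [CompactSpace G]
    [MeasurableSpace G] [BorelSpace G]
    (μ : Measure G) [μ.IsHaarMeasure] [IsProbabilityMeasure μ]
    {N m c : ℕ} (dα : Fin m → ℕ)
    (φ : G →* Matrix.unitaryGroup (Fin N) ℂ)
    (hcont : Continuous fun g => (φ g : Matrix (Fin N) (Fin N) ℂ))
    (F : (α : Fin m) → Fin (dα α) → Matrix (Fin N) (Fin N) ℂ)
    (C : Fin c → Matrix (Fin N) (Fin N) ℂ)
    -- Frobenius orthonormality of the whole family `{F α j} ∪ {C l}`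
    (horthF : ∀ α j k, Matrix.trace (F α j * F α k) = if j = k then (-1 : ℂ) else 0)
    (horthF' : ∀ α β, α ≠ β → ∀ j k, Matrix.trace (F α j * F β k) = 0)
    (horthFC : ∀ α j l, Matrix.trace (F α j * C l) = 0)
    (horthC : ∀ l l', Matrix.trace (C l * C l') = if l = l' then (-1 : ℂ) else 0)
    -- the total span 𝔪, the ideals 𝔪_α and the center 𝔠
    (mm : Submodule ℝ (Matrix (Fin N) (Fin N) ℂ))
    (hmm : mm = Submodule.span ℝ
      (Set.range (fun p : (Σ α : Fin m, Fin (dα α)) => F p.1 p.2) ∪ Set.range C))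
    -- (ii) conjugation invariance; the center commutes with the representation
    (hConjF : ∀ α (g : G), ∀ X ∈ Submodule.span ℝ (Set.range (F α)),
      (φ g : Matrix (Fin N) (Fin N) ℂ) * X * (φ g⁻¹ : Matrix (Fin N) (Fin N) ℂ) ∈
        Submodule.span ℝ (Set.range (F α)))
    (hCommC : ∀ g : G, ∀ X ∈ Submodule.span ℝ (Set.range C),
      (φ g : Matrix (Fin N) (Fin N) ℂ) * X = X * (φ g : Matrix (Fin N) (Fin N) ℂ))
    -- (iii) each complexified ideal is irreducible and has no nonzero `G`-commuting element
    (hirr : ∀ α, ∀ W : Submodule ℂ (Matrix (Fin N) (Fin N) ℂ),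
      W ≤ Submodule.span ℂ (Set.range (F α)) →
      (∀ g : G, ∀ X ∈ W,
        (φ g : Matrix (Fin N) (Fin N) ℂ) * X * (φ g⁻¹ : Matrix (Fin N) (Fin N) ℂ) ∈ W) →
      W = ⊥ ∨ W = Submodule.span ℂ (Set.range (F α)))
    (hnocomm : ∀ α, ∀ X ∈ Submodule.span ℂ (Set.range (F α)),
      (∀ g : G, (φ g : Matrix (Fin N) (Fin N) ℂ) * X = X * (φ g : Matrix (Fin N) (Fin N) ℂ)) →
      X = 0)
    -- (iv) the complexified ideals are pairwise non-isomorphic as `G`-representations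
    (hnoniso : ∀ α β, α ≠ β →
      ∀ T : Matrix (Fin N) (Fin N) ℂ →ₗ[ℂ] Matrix (Fin N) (Fin N) ℂ,
      (∀ X ∈ Submodule.span ℂ (Set.range (F α)), T X ∈ Submodule.span ℂ (Set.range (F β))) →
      (∀ g : G, ∀ X ∈ Submodule.span ℂ (Set.range (F α)),
        T ((φ g : Matrix (Fin N) (Fin N) ℂ) * X * (φ g⁻¹ : Matrix (Fin N) (Fin N) ℂ))
          = (φ g : Matrix (Fin N) (Fin N) ℂ) * T X * (φ g⁻¹ : Matrix (Fin N) (Fin N) ℂ)) →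
      ∀ X ∈ Submodule.span ℂ (Set.range (F α)), T X = 0)
    (A : Matrix (Fin N) (Fin N) ℂ) (hA : A ∈ mm) :
    (∫ g, ((φ g : Matrix (Fin N) (Fin N) ℂ) * A * (φ g⁻¹ : Matrix (Fin N) (Fin N) ℂ)) ⊗ₖ
        ((φ g : Matrix (Fin N) (Fin N) ℂ) * A * (φ g⁻¹ : Matrix (Fin N) (Fin N) ℂ)) ∂μ)
      = (∑ α, ((∑ j, (Matrix.trace (A * F α j)) ^ 2) / (dα α : ℂ)) •
            ∑ j, F α j ⊗ₖ F α j)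
        + (∑ l, (-(Matrix.trace (A * C l))) • C l) ⊗ₖ
            (∑ l, (-(Matrix.trace (A * C l))) • C l) := by
  have hD : IsInvariantDecomposition φ F C :=
    { orthonormal := horthF
      trace_mul_of_ne := horthF'
      trace_mul_center := horthFC
      orthonormal_center := horthC
      conjAut_mem := fun α g _ hX => conjAut_mem_span_of_real φ g (hConjF α g) hX
      conjAut_center := fun g l =>
        (conjAut_eq_self_iff φ g (C l)).2 (hCommC g _ (Submodule.subset_span ⟨l, rfl⟩)) }
  have hA' : A ∈ Submodule.span ℂ (Set.range (fullFamily F C)) := by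
    rw [hmm, ← Set.Sum.elim_range] at hA
    exact Submodule.span_le_restrictScalars ℝ ℂ _ hA
  have key := hD.integral_conjAut_kronecker_conjAut (μ := μ) hcont
    (fun α W hW hinv => hirr α W hW (by simpa only [conjAut_apply] using hinv))
    (fun α X hX hfix => hnocomm α X hX fun g => (conjAut_eq_self_iff φ g X).1 (hfix g))
    (fun α β hαβ T hT hTφ => hnoniso α β hαβ T hT (by simpa only [conjAut_apply] using hTφ)) hA'
  simpa only [conjAut_apply, traceProj_apply, Fintype.card_fin] using key

/-- second moment for a compact, reductive DLA. With
`𝔪 = (⊕_α 𝔪_α) ⊕ 𝔠` spanned by a Frobenius-orthonormal skew-Hermitian family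
(`F α j` spanning the simple ideals `𝔪_α` and `C l` spanning the center `𝔠`),
invariant under conjugation by the representation, with each complexified ideal
irreducible, containing no nonzero `G`-commuting matrix, and pairwise non-isomorphic:
for `A ∈ 𝔪`,
`∫_G (φ(g) A φ(g)⁻¹)^{⊗2} dμ = ∑_α (‖A_α‖_F²/d_α) • K_α + A_𝔠 ⊗ A_𝔠`. -/
theorem stmt_2
    {G : Type} [Group G] [TopologicalSpace G] [IsTopologicalGroup G] [CompactSpace G]
    [MeasurableSpace G] [BorelSpace G]
    (μ : Measure G) [μ.IsHaarMeasure] [IsProbabilityMeasure μ]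
    {N m c : ℕ} (hN : 1 ≤ N) (dα : Fin m → ℕ) (hdα : ∀ α, 1 ≤ dα α)
    (φ : G →* Matrix.unitaryGroup (Fin N) ℂ)
    (hcont : Continuous fun g => (φ g : Matrix (Fin N) (Fin N) ℂ))
    (F : (α : Fin m) → Fin (dα α) → Matrix (Fin N) (Fin N) ℂ)
    (C : Fin c → Matrix (Fin N) (Fin N) ℂ)
    (hFskew : ∀ α j, (F α j)ᴴ = -(F α j))
    (hCskew : ∀ l, (C l)ᴴ = -(C l))
    -- Frobenius orthonormality of the whole family `{F α j} ∪ {C l}`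
    (horthF : ∀ α j k, Matrix.trace (F α j * F α k) = if j = k then (-1 : ℂ) else 0)
    (horthF' : ∀ α β, α ≠ β → ∀ j k, Matrix.trace (F α j * F β k) = 0)
    (horthFC : ∀ α j l, Matrix.trace (F α j * C l) = 0)
    (horthC : ∀ l l', Matrix.trace (C l * C l') = if l = l' then (-1 : ℂ) else 0)
    -- the total span 𝔪, the ideals 𝔪_α and the center 𝔠
    (mm : Submodule ℝ (Matrix (Fin N) (Fin N) ℂ))
    (hmm : mm = Submodule.span ℝ
      (Set.range (fun p : (Σ α : Fin m, Fin (dα α)) => F p.1 p.2) ∪ Set.range C))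
    -- (i) 𝔪 is a Lie algebra, each 𝔪_α an ideal, 𝔠 central
    (hLie : ∀ X ∈ mm, ∀ Y ∈ mm, ⁅X, Y⁆ ∈ mm)
    (hIdeal : ∀ α, ∀ X ∈ Submodule.span ℝ (Set.range (F α)), ∀ Y ∈ mm,
      ⁅X, Y⁆ ∈ Submodule.span ℝ (Set.range (F α)))
    (hCentral : ∀ X ∈ Submodule.span ℝ (Set.range C), ∀ Y ∈ mm, ⁅X, Y⁆ = 0)
    -- (ii) conjugation invariance; the center commutes with the representation
    (hConjF : ∀ α (g : G), ∀ X ∈ Submodule.span ℝ (Set.range (F α)),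
      (φ g : Matrix (Fin N) (Fin N) ℂ) * X * (φ g⁻¹ : Matrix (Fin N) (Fin N) ℂ) ∈
        Submodule.span ℝ (Set.range (F α)))
    (hConjC : ∀ g : G, ∀ X ∈ Submodule.span ℝ (Set.range C),
      (φ g : Matrix (Fin N) (Fin N) ℂ) * X * (φ g⁻¹ : Matrix (Fin N) (Fin N) ℂ) ∈
        Submodule.span ℝ (Set.range C))
    (hCommC : ∀ g : G, ∀ X ∈ Submodule.span ℝ (Set.range C),
      (φ g : Matrix (Fin N) (Fin N) ℂ) * X = X * (φ g : Matrix (Fin N) (Fin N) ℂ))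
    -- (iii) each complexified ideal is irreducible and has no nonzero `G`-commuting element
    (hirr : ∀ α, ∀ W : Submodule ℂ (Matrix (Fin N) (Fin N) ℂ),
      W ≤ Submodule.span ℂ (Set.range (F α)) →
      (∀ g : G, ∀ X ∈ W,
        (φ g : Matrix (Fin N) (Fin N) ℂ) * X * (φ g⁻¹ : Matrix (Fin N) (Fin N) ℂ) ∈ W) →
      W = ⊥ ∨ W = Submodule.span ℂ (Set.range (F α)))
    (hnocomm : ∀ α, ∀ X ∈ Submodule.span ℂ (Set.range (F α)),
      (∀ g : G, (φ g : Matrix (Fin N) (Fin N) ℂ) * X = X * (φ g : Matrix (Fin N) (Fin N) ℂ)) →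
      X = 0)
    -- (iv) the complexified ideals are pairwise non-isomorphic as `G`-representations
    (hnoniso : ∀ α β, α ≠ β →
      ∀ T : Matrix (Fin N) (Fin N) ℂ →ₗ[ℂ] Matrix (Fin N) (Fin N) ℂ,
      (∀ X ∈ Submodule.span ℂ (Set.range (F α)), T X ∈ Submodule.span ℂ (Set.range (F β))) →
      (∀ g : G, ∀ X ∈ Submodule.span ℂ (Set.range (F α)),
        T ((φ g : Matrix (Fin N) (Fin N) ℂ) * X * (φ g⁻¹ : Matrix (Fin N) (Fin N) ℂ))
          = (φ g : Matrix (Fin N) (Fin N) ℂ) * T X * (φ g⁻¹ : Matrix (Fin N) (Fin N) ℂ)) →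
      ∀ X ∈ Submodule.span ℂ (Set.range (F α)), T X = 0)
    (A : Matrix (Fin N) (Fin N) ℂ) (hA : A ∈ mm) :
    (∫ g, ((φ g : Matrix (Fin N) (Fin N) ℂ) * A * (φ g⁻¹ : Matrix (Fin N) (Fin N) ℂ)) ⊗ₖ
        ((φ g : Matrix (Fin N) (Fin N) ℂ) * A * (φ g⁻¹ : Matrix (Fin N) (Fin N) ℂ)) ∂μ)
      = (∑ α, ((∑ j, (Matrix.trace (A * F α j)) ^ 2) / (dα α : ℂ)) •
            ∑ j, F α j ⊗ₖ F α j)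
        + (∑ l, (-(Matrix.trace (A * C l))) • C l) ⊗ₖ
            (∑ l, (-(Matrix.trace (A * C l))) • C l) :=
  stmt_2_general μ dα φ hcont F C horthF horthF' horthFC horthC mm hmm hConjF hCommC hirr hnocomm
    hnoniso A hA
end

section
/- Let A and O be arbitrary N×N complex matrices and let H be an N×N complex matrix such that exp(θH) lies in the image φ(G) for every real θ. Then ∫_G ∫_G Tr( φ(g⁻) A φ(g⁻)⁻¹ · [H, φ(g⁺) O φ(g⁺)⁻¹] ) dμ(g⁺) dμ(g⁻) = 0, where [X,Y] := XY − YX and exp is the matrix exponential. -/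
/-!
The inner integral is linear in `φ(g⁺) O φ(g⁺)⁻¹`, so it equals `Tr(X [H, M])` with
`M = ∫ φ(g) O φ(g)⁻¹ dμ`. By left invariance of Haar measure `M` commutes with every `φ(g)`,
hence with every `exp(θH)`; differentiating at `θ = 0` shows that `H` commutes with `M`.
-/

open MeasureTheory Matrix

theorem commute_of_forall_commute_exp_smul {𝕂 𝔸 : Type*} [RCLike 𝕂] [NormedRing 𝔸]
    [NormedAlgebra 𝕂 𝔸] [CompleteSpace 𝔸] {x y : 𝔸}
    (h : ∀ t : 𝕂, Commute (NormedSpace.exp (t • x)) y) : Commute x y := by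
  have hexp := hasDerivAt_exp_smul_const (𝕂 := 𝕂) x 0
  have hleft := hexp.mul_const y
  have hright := hexp.const_mul y
  simp only [funext fun t => (h t).eq] at hleft
  simpa [Commute, SemiconjBy, mul_assoc] using hleft.unique hright

section FiniteDimensional

variable {X 𝕜 E F : Type*} [MeasurableSpace X] {μ : Measure X} [RCLike 𝕜]
  [NormedAddCommGroup E] [NormedSpace 𝕜 E] [NormedSpace ℝ E] [FiniteDimensional 𝕜 E]

theorem LinearMap.integral_comp_comm [NormedAddCommGroup F] [NormedSpace 𝕜 F] [NormedSpace ℝ F]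
    [CompleteSpace F] (T : E →ₗ[𝕜] F) {f : X → E} (hf : Integrable f μ) :
    ∫ x, T (f x) ∂μ = T (∫ x, f x ∂μ) :=
  haveI := FiniteDimensional.complete 𝕜 E
  (LinearMap.toContinuousLinearMap T).integral_comp_comm hf

theorem Representation.integral_mem_invariants {G : Type*} [Group G] [MeasurableSpace G]
    [MeasurableMul G] {μ : Measure G} [μ.IsMulLeftInvariant] (ρ : Representation 𝕜 G E) {v : E}
    (hv : Integrable (fun g => ρ g v) μ) :
    ∫ g, ρ g v ∂μ ∈ ρ.invariants := by
  have := FiniteDimensional.complete 𝕜 E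
  intro h
  rw [← (ρ h).integral_comp_comm hv]
  simpa [← Module.End.mul_apply, ← map_mul] using integral_mul_left_eq_self (fun g => ρ g v) h

end FiniteDimensional

namespace MonoidHom

variable (R : Type*) {G A : Type*} [Group G]

def conjRepresentation [CommSemiring R] [Semiring A] [Algebra R A] (φ : G →* A) :
    Representation R G A where
  toFun g := LinearMap.mulRight R (φ g⁻¹) ∘ₗ LinearMap.mulLeft R (φ g)
  map_one' := by ext; simp
  map_mul' g h := by ext; simp [mul_assoc]

theorem conjRepresentation_apply [CommSemiring R] [Semiring A] [Algebra R A] (φ : G →* A)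
    (g : G) (x : A) : φ.conjRepresentation R g x = φ g * x * φ g⁻¹ :=
  rfl

theorem mem_invariants_conjRepresentation_iff [CommRing R] [Ring A] [Algebra R A] (φ : G →* A)
    (x : A) : x ∈ (φ.conjRepresentation R).invariants ↔ ∀ g, Commute (φ g) x := by
  have hinv : ∀ g, φ g⁻¹ * φ g = 1 := fun g => by rw [← map_mul, inv_mul_cancel, map_one]
  refine forall_congr' fun g => ⟨fun h => ?_, fun h => ?_⟩
  · calc φ g * x = φ g * x * φ g⁻¹ * φ g := by rw [mul_assoc _ (φ g⁻¹), hinv, mul_one]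
      _ = x * φ g := by rw [← conjRepresentation_apply R, h]
  · rw [conjRepresentation_apply, h.eq, mul_assoc, ← map_mul, mul_inv_cancel, map_one, mul_one]

end MonoidHom

theorem stmt_5_general
    {G : Type} [Group G] [TopologicalSpace G] [IsTopologicalGroup G] [CompactSpace G]
    [MeasurableSpace G] [BorelSpace G]
    (μ : Measure G) [μ.IsHaarMeasure]
    {N : ℕ}
    (φ : G →* Matrix.unitaryGroup (Fin N) ℂ)
    (hcont : Continuous fun g => (φ g : Matrix (Fin N) (Fin N) ℂ))
    (A O H : Matrix (Fin N) (Fin N) ℂ)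
    (hH : ∀ θ : ℝ, ∃ g : G, (φ g : Matrix (Fin N) (Fin N) ℂ) = NormedSpace.exp (θ • H)) :
    (∫ gm, ∫ gp,
        Matrix.trace ((φ gm : Matrix (Fin N) (Fin N) ℂ) * A *
            (φ gm⁻¹ : Matrix (Fin N) (Fin N) ℂ) *
          ⁅H, (φ gp : Matrix (Fin N) (Fin N) ℂ) * O *
            (φ gp⁻¹ : Matrix (Fin N) (Fin N) ℂ)⁆) ∂μ ∂μ) = 0 := by
  -- Any norm would do for the integrals; the operator norm also makes matrices a normed algebra.
  open scoped Matrix.Norms.Operator in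
  set ρ := ((unitaryGroup (Fin N) ℂ).subtype.comp φ).conjRepresentation ℂ
  have hρ : Continuous fun g => ρ g O := (hcont.mul continuous_const).mul (hcont.comp continuous_inv)
  have hint := hρ.integrable_of_hasCompactSupport (μ := μ) (.of_compactSpace _)
  have hM : ∀ g, Commute (φ g : Matrix (Fin N) (Fin N) ℂ) (∫ g, ρ g O ∂μ) := by
    simpa using (MonoidHom.mem_invariants_conjRepresentation_iff ℂ _ _).1
      (ρ.integral_mem_invariants hint)
  have hHM : Commute H (∫ g, ρ g O ∂μ) := commute_of_forall_commute_exp_smul (𝕂 := ℝ) fun θ => by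
    obtain ⟨g, hg⟩ := hH θ
    exact hg ▸ hM g
  have hinner : ∀ X : Matrix (Fin N) (Fin N) ℂ, ∫ gp, trace (X * ⁅H, ρ gp O⁆) ∂μ = 0 := fun X =>
    ((traceLinearMap (Fin N) ℂ ℂ ∘ₗ LinearMap.mulLeft ℂ X ∘ₗ
      (LinearMap.mulLeft ℂ H - LinearMap.mulRight ℂ H)).integral_comp_comm hint).trans <| by
    simp [hHM.eq]
  exact (integral_congr_ae (.of_forall fun gm => hinner _)).trans (integral_zero _ _)

/-- vanishing mean. For a compact group `G` with normalized Haar measure and a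
continuous unitary representation `φ`, if `H` is a matrix with `exp(θH) ∈ φ(G)` for every real
`θ`, then for arbitrary matrices `A`, `O`:
`∫_G ∫_G Tr(φ(g⁻) A φ(g⁻)⁻¹ [H, φ(g⁺) O φ(g⁺)⁻¹]) dμ(g⁺) dμ(g⁻) = 0`. -/
theorem stmt_5
    {G : Type} [Group G] [TopologicalSpace G] [IsTopologicalGroup G] [CompactSpace G]
    [MeasurableSpace G] [BorelSpace G]
    (μ : Measure G) [μ.IsHaarMeasure] [IsProbabilityMeasure μ]
    {N : ℕ} (hN : 1 ≤ N)
    (φ : G →* Matrix.unitaryGroup (Fin N) ℂ)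
    (hcont : Continuous fun g => (φ g : Matrix (Fin N) (Fin N) ℂ))
    (A O H : Matrix (Fin N) (Fin N) ℂ)
    (hH : ∀ θ : ℝ, ∃ g : G, (φ g : Matrix (Fin N) (Fin N) ℂ) = NormedSpace.exp (θ • H)) :
    (∫ gm, ∫ gp,
        Matrix.trace ((φ gm : Matrix (Fin N) (Fin N) ℂ) * A *
            (φ gm⁻¹ : Matrix (Fin N) (Fin N) ℂ) *
          ⁅H, (φ gp : Matrix (Fin N) (Fin N) ℂ) * O *
            (φ gp⁻¹ : Matrix (Fin N) (Fin N) ℂ)⁆) ∂μ ∂μ) = 0 :=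
  stmt_5_general μ φ hcont A O H hH
end

section
/- Let H be any skew-Hermitian N×N complex matrix and let F_1,…,F_d be skew-Hermitian N×N matrices that are orthonormal for the Frobenius inner product ⟨A,B⟩ = −Tr(AB). Then Σ_{j,k=1}^d (Tr([H,F_k] F_j))² ≤ 2 d · (−Tr(H²)), i.e. the squared Killing norm of H is at most 2d times its squared Frobenius norm. -/
open Matrix

namespace Stmt6Aux

variable {n : Type*} [Fintype n] [DecidableEq n]

/-- Real Frobenius inner product. -/
noncomputable def fip (X Y : Matrix n n ℂ) : ℝ := (Matrix.trace (Xᴴ * Y)).re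

lemma fip_self_eq (X : Matrix n n ℂ) :
    fip X X = ∑ i, ∑ j, Complex.normSq (X i j) := by
  unfold fip
  rw [Matrix.trace]
  simp only [Matrix.diag, Matrix.mul_apply, conjTranspose_apply, Complex.re_sum]
  rw [Finset.sum_comm]
  congr 1; ext i; congr 1; ext j
  simp [Complex.normSq_apply, Complex.mul_re, Complex.star_def]

lemma fip_nonneg (X : Matrix n n ℂ) : 0 ≤ fip X X := by
  rw [fip_self_eq]
  exact Finset.sum_nonneg fun i _ => Finset.sum_nonneg fun j _ => Complex.normSq_nonneg _

lemma fip_symm (X Y : Matrix n n ℂ) : fip X Y = fip Y X := by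
  unfold fip
  have := Matrix.trace_conjTranspose (Yᴴ * X)
  rw [conjTranspose_mul, conjTranspose_conjTranspose] at this
  rw [this]
  exact Complex.conj_re _

lemma fip_add_right (X Y Z : Matrix n n ℂ) : fip X (Y + Z) = fip X Y + fip X Z := by
  unfold fip; rw [Matrix.mul_add, trace_add]; simp

lemma fip_sub_right (X Y Z : Matrix n n ℂ) : fip X (Y - Z) = fip X Y - fip X Z := by
  unfold fip; rw [Matrix.mul_sub, trace_sub]; simp

lemma fip_sub_left (X Y Z : Matrix n n ℂ) : fip (X - Y) Z = fip X Z - fip Y Z := by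
  rw [fip_symm, fip_sub_right, fip_symm Z X, fip_symm Z Y]

lemma fip_smul_right (c : ℝ) (X Y : Matrix n n ℂ) : fip X ((c : ℂ) • Y) = c * fip X Y := by
  unfold fip
  rw [Matrix.mul_smul, trace_smul, smul_eq_mul, Complex.mul_re]
  simp

lemma fip_smul_left (c : ℝ) (X Y : Matrix n n ℂ) : fip ((c : ℂ) • X) Y = c * fip X Y := by
  rw [fip_symm, fip_smul_right, fip_symm]

lemma fip_sum_right {ι : Type*} (s : Finset ι) (X : Matrix n n ℂ) (Y : ι → Matrix n n ℂ) :
    fip X (∑ i ∈ s, Y i) = ∑ i ∈ s, fip X (Y i) := by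
  unfold fip
  rw [Matrix.mul_sum, trace_sum, Complex.re_sum]

lemma fip_sum_left {ι : Type*} (s : Finset ι) (X : Matrix n n ℂ) (Y : ι → Matrix n n ℂ) :
    fip (∑ i ∈ s, Y i) X = ∑ i ∈ s, fip (Y i) X := by
  rw [fip_symm, fip_sum_right]
  exact Finset.sum_congr rfl fun i _ => fip_symm _ _

/-- Finite Bessel inequality for `fip`. -/
lemma bessel {d : ℕ} (F : Fin d → Matrix n n ℂ)
    (hF : ∀ j k, fip (F j) (F k) = if j = k then 1 else 0)
    (C : Matrix n n ℂ) :
    ∑ j, (fip (F j) C) ^ 2 ≤ fip C C := by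
  set c : Fin d → ℝ := fun j => fip (F j) C with hc
  set S : Matrix n n ℂ := ∑ j, ((c j : ℂ)) • F j with hS
  have hSC : fip S C = ∑ j, (c j) ^ 2 := by
    rw [hS, fip_sum_left]
    refine Finset.sum_congr rfl fun j _ => ?_
    rw [fip_smul_left, sq]
  have hCS : fip C S = ∑ j, (c j) ^ 2 := by rw [fip_symm]; exact hSC
  have hSS : fip S S = ∑ j, (c j) ^ 2 := by
    rw [hS, fip_sum_left]
    refine Finset.sum_congr rfl fun j _ => ?_
    rw [fip_smul_left, fip_sum_right]
    have : ∀ k ∈ Finset.univ, fip (F j) ((c k : ℂ) • F k) = if j = k then c k else 0 := by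
      intro k _
      rw [fip_smul_right, hF]
      split <;> simp
    rw [Finset.sum_congr rfl this, Finset.sum_ite_eq]
    simp [sq]
  have h0 : 0 ≤ fip (C - S) (C - S) := fip_nonneg _
  rw [fip_sub_left, fip_sub_right, fip_sub_right, hSC, hCS, hSS] at h0
  linarith

lemma fip_unitary_conj (U : Matrix n n ℂ) (hU'U : star U * U = 1)
    (M : Matrix n n ℂ) : fip (U * M * star U) (U * M * star U) = fip M M := by
  have e1 : (U * M * star U)ᴴ = U * Mᴴ * star U := by
    simp [conjTranspose_mul, Matrix.star_eq_conjTranspose, Matrix.mul_assoc]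
  unfold fip
  rw [e1]
  have e2 : U * Mᴴ * star U * (U * M * star U) = U * (Mᴴ * ((star U * U) * M)) * star U := by
    noncomm_ring
  rw [e2, hU'U, one_mul, Matrix.trace_mul_cycle, ← Matrix.mul_assoc, hU'U, one_mul]

/-- Böttcher–Wenzel-type bound for Hermitian `A`. -/
lemma comm_fip_le (A B : Matrix n n ℂ) (hA : A.IsHermitian) :
    fip (A * B - B * A) (A * B - B * A) ≤ 2 * fip A A * fip B B := by
  set U : Matrix n n ℂ := (hA.eigenvectorUnitary : Matrix n n ℂ) with hUdef
  set lam : n → ℝ := hA.eigenvalues with hlam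
  set D : Matrix n n ℂ := diagonal (fun m => ((lam m : ℝ) : ℂ)) with hD
  have hUU : U * star U = 1 := (Matrix.mem_unitaryGroup_iff).mp hA.eigenvectorUnitary.2
  have hU'U : star U * U = 1 := (Matrix.mem_unitaryGroup_iff').mp hA.eigenvectorUnitary.2
  have hspec : A = U * D * star U := hA.spectral_theorem
  set B' : Matrix n n ℂ := star U * B * U with hB'
  clear_value U lam D B'
  have key1 : A * B - B * A = U * (D * B' - B' * D) * star U := by
    rw [hspec, hB']
    have : U * (D * (star U * B * U) - star U * B * U * D) * star U =
        U * D * star U * B * (U * star U) - (U * star U) * (B * (U * D * star U)) := by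
      noncomm_ring
    rw [this, hUU, one_mul, mul_one]
  have key2 : fip (A * B - B * A) (A * B - B * A) = fip (D * B' - B' * D) (D * B' - B' * D) := by
    rw [key1, fip_unitary_conj U hU'U]
  have hBB' : fip B' B' = fip B B := by
    have : B' = star U * B * star (star U) := by rw [star_star]; exact hB'
    rw [this, fip_unitary_conj (star U) (by rw [star_star]; exact hUU)]
  have hAD : fip A A = fip D D := by
    rw [hspec, fip_unitary_conj U hU'U]
  have hDD : fip D D = ∑ i, (lam i) ^ 2 := by
    rw [fip_self_eq]
    refine Finset.sum_congr rfl fun i _ => ?_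
    rw [Finset.sum_eq_single i]
    · simp [hD, diagonal_apply_eq, Complex.normSq_ofReal, sq]
    · intro j _ hj
      simp [hD, diagonal_apply_ne' _ hj]
    · simp
  have hentry : ∀ i j, (D * B' - B' * D) i j = ((lam i - lam j : ℝ) : ℂ) * B' i j := by
    intro i j
    simp only [Matrix.sub_apply, hD, diagonal_mul, mul_diagonal]
    rw [Complex.ofReal_sub]
    ring
  have key3 : fip (D * B' - B' * D) (D * B' - B' * D)
      = ∑ i, ∑ j, (lam i - lam j) ^ 2 * Complex.normSq (B' i j) := by
    rw [fip_self_eq]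
    refine Finset.sum_congr rfl fun i _ => Finset.sum_congr rfl fun j _ => ?_
    rw [hentry i j, Complex.normSq_mul, Complex.normSq_ofReal, sq]
  have hpt : ∀ i j, (lam i - lam j) ^ 2 ≤ 2 * ∑ m, (lam m) ^ 2 := by
    intro i j
    by_cases hij : i = j
    · subst hij
      have h0 : (lam i - lam i) ^ 2 = 0 := by simp
      rw [h0]
      positivity
    · have h1 : (lam i - lam j) ^ 2 ≤ 2 * ((lam i) ^ 2 + (lam j) ^ 2) := by
        have he : (lam i - lam j) ^ 2
            = 2 * ((lam i) ^ 2 + (lam j) ^ 2) - (lam i + lam j) ^ 2 := by ring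
        rw [he]
        linarith [sq_nonneg (lam i + lam j)]
      have h2 : (lam i) ^ 2 + (lam j) ^ 2 ≤ ∑ m, (lam m) ^ 2 := by
        have hp := Finset.sum_pair (f := fun m => (lam m) ^ 2) hij
        rw [← hp]
        exact Finset.sum_le_sum_of_subset_of_nonneg (Finset.subset_univ _)
          (fun m _ _ => sq_nonneg _)
      linarith
  calc fip (A * B - B * A) (A * B - B * A)
      = ∑ i, ∑ j, (lam i - lam j) ^ 2 * Complex.normSq (B' i j) := by rw [key2, key3]
    _ ≤ ∑ i, ∑ j, (2 * ∑ m, (lam m) ^ 2) * Complex.normSq (B' i j) := by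
        refine Finset.sum_le_sum fun i _ => Finset.sum_le_sum fun j _ => ?_
        exact mul_le_mul_of_nonneg_right (hpt i j) (Complex.normSq_nonneg _)
    _ = (2 * ∑ m, (lam m) ^ 2) * ∑ i, ∑ j, Complex.normSq (B' i j) := by
        have hgen : ∀ (c : ℝ) (g : n → n → ℝ),
            ∑ i, ∑ j, c * g i j = c * ∑ i, ∑ j, g i j := by
          intro c g
          rw [Finset.mul_sum]
          exact Finset.sum_congr rfl fun i _ => (Finset.mul_sum _ _ _).symm
        exact hgen _ _
    _ = 2 * fip A A * fip B B := by
        rw [← fip_self_eq, hBB', hAD, hDD]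

lemma fip_I_smul (X : Matrix n n ℂ) :
    fip (Complex.I • X) (Complex.I • X) = fip X X := by
  unfold fip
  rw [conjTranspose_smul, Matrix.smul_mul, Matrix.mul_smul, smul_smul]
  simp [Complex.star_def, Complex.conj_I]

end Stmt6Aux

open Stmt6Aux in
/-- For a skew-Hermitian `H` and a Frobenius-orthonormal family
`F₁, …, F_d` of skew-Hermitian `N×N` matrices (w.r.t. `⟨A,B⟩ = −Tr(AB)`),
the squared Killing norm `∑_{j,k} (Tr([H,F_k] F_j))²` is at most `2d·(−Tr(H²))`. -/
theorem stmt_6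
    {N d : ℕ} (hN : 1 ≤ N)
    (H : Matrix (Fin N) (Fin N) ℂ) (hHskew : Hᴴ = -H)
    (F : Fin d → Matrix (Fin N) (Fin N) ℂ)
    (hskew : ∀ j, (F j)ᴴ = -(F j))
    (horth : ∀ j k, Matrix.trace (F j * F k) = if j = k then (-1 : ℂ) else 0) :
    (∑ j, ∑ k, ((Matrix.trace (⁅H, F k⁆ * F j)).re) ^ 2)
      ≤ 2 * (d : ℝ) * (-(Matrix.trace (H * H)).re) := by
  have hF : ∀ j k, fip (F j) (F k) = if j = k then 1 else 0 := by
    intro j k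
    unfold fip
    rw [hskew j, Matrix.neg_mul, trace_neg, horth j k]
    split <;> simp
  have hHH : fip H H = -(Matrix.trace (H * H)).re := by
    unfold fip
    rw [hHskew, Matrix.neg_mul, trace_neg]
    simp
  have hterm : ∀ j k, ((Matrix.trace (⁅H, F k⁆ * F j)).re) ^ 2
      = (fip (F j) (⁅H, F k⁆)) ^ 2 := by
    intro j k
    have : fip (F j) (⁅H, F k⁆) = -(Matrix.trace (⁅H, F k⁆ * F j)).re := by
      unfold fip
      rw [hskew j, Matrix.neg_mul, trace_neg, Matrix.trace_mul_comm]
      simp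
    rw [this]
    ring
  -- Hermitian matrix A = i • H
  have hA : (Complex.I • H).IsHermitian := by
    show (Complex.I • H)ᴴ = Complex.I • H
    rw [conjTranspose_smul, hHskew]
    simp [Complex.star_def, Complex.conj_I]
  have hbw : ∀ k, fip (⁅H, F k⁆) (⁅H, F k⁆) ≤ 2 * fip H H := by
    intro k
    have hcomm : Complex.I • (⁅H, F k⁆) =
        (Complex.I • H) * F k - F k * (Complex.I • H) := by
      rw [Ring.lie_def, Matrix.smul_mul, Matrix.mul_smul, smul_sub]
    have h1 : fip (⁅H, F k⁆) (⁅H, F k⁆)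
        = fip ((Complex.I • H) * F k - F k * (Complex.I • H))
              ((Complex.I • H) * F k - F k * (Complex.I • H)) := by
      rw [← hcomm, fip_I_smul]
    rw [h1]
    have h2 := comm_fip_le (Complex.I • H) (F k) hA
    have h3 : fip (Complex.I • H) (Complex.I • H) = fip H H := fip_I_smul H
    have h4 : fip (F k) (F k) = 1 := by rw [hF]; simp
    rw [h3, h4, mul_one] at h2
    exact h2
  rw [Finset.sum_comm]
  calc (∑ k, ∑ j, ((Matrix.trace (⁅H, F k⁆ * F j)).re) ^ 2)
      ≤ ∑ k : Fin d, 2 * fip H H := by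
        refine Finset.sum_le_sum fun k _ => ?_
        calc (∑ j, ((Matrix.trace (⁅H, F k⁆ * F j)).re) ^ 2)
            = ∑ j, (fip (F j) (⁅H, F k⁆)) ^ 2 :=
              Finset.sum_congr rfl fun j _ => hterm j k
          _ ≤ fip (⁅H, F k⁆) (⁅H, F k⁆) := bessel F hF _
          _ ≤ 2 * fip H H := hbw k
    _ = 2 * (d : ℝ) * (-(Matrix.trace (H * H)).re) := by
        rw [Finset.sum_const, Finset.card_univ, Fintype.card_fin, nsmul_eq_mul, hHH]
        ring
end

section
/- Let n ≥ 1 and 0 ≤ k ≤ n, and let s : {1,…,n} → ℝ take only the values −1 and +1, with exactly k indices j for which s_j = −1. Then Σ_{m=1}^{n−1} ( m·s_{m+1} − Σ_{j=1}^m s_j )² / (4·m·(m+1)) = k(n−k)/n. (This computes the squared Frobenius norm of the projection of a Hamming-weight-k computational basis state onto the dynamical Lie algebra of the SU-compound ansatz: the left-hand side equals Σ_{m=1}^{n−1} Tr(iρ H_m)² for ρ the basis-state density matrix with σ_z-diagonal signs s and H_m = (i/2)·(1/√(m(m+1)))·(m σ^z_{m+1} − Σ_{j=1}^m σ^z_j)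 the orthonormal Cartan basis.) -/
lemma tel_aux (f : ℕ → ℝ) : ∀ n : ℕ,
    ∑ m ∈ Finset.Icc 1 n, (f m - f (m + 1)) = f 1 - f (n + 1) := by
  intro n
  induction n with
  | zero => simp
  | succ n ih =>
    rw [Finset.sum_Icc_succ_top (by omega), ih]
    ring

/-- projected norm of a Hamming-weight-`k` basis state. Let `s₁, …, s_n` be
a `±1`-valued sequence with exactly `k` entries equal to `−1` (`0 ≤ k ≤ n`). Then
`∑_{m=1}^{n−1} (m·s_{m+1} − ∑_{j=1}^m s_j)² / (4m(m+1)) = k(n−k)/n`. -/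
theorem stmt_12 (n k : ℕ) (hn : 1 ≤ n) (hk : k ≤ n) (s : ℕ → ℝ)
    (hs : ∀ j ∈ Finset.Icc 1 n, s j = 1 ∨ s j = -1)
    (hcard : ((Finset.Icc 1 n).filter fun j => s j = -1).card = k) :
    (∑ m ∈ Finset.Icc 1 (n - 1),
        ((m : ℝ) * s (m + 1) - ∑ j ∈ Finset.Icc 1 m, s j) ^ 2 / (4 * m * (m + 1)))
      = (k : ℝ) * ((n : ℝ) - (k : ℝ)) / (n : ℝ) := by
  set S : ℕ → ℝ := fun m => ∑ j ∈ Finset.Icc 1 m, s j with hS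
  have hsq : ∀ j ∈ Finset.Icc 1 n, s j ^ 2 = 1 := by
    intro j hj
    rcases hs j hj with h | h <;> rw [h] <;> ring
  set f : ℕ → ℝ := fun m => S m ^ 2 / (4 * m) with hf
  -- per-term identity
  have hterm : ∀ m ∈ Finset.Icc 1 (n - 1),
      ((m : ℝ) * s (m + 1) - S m) ^ 2 / (4 * m * (m + 1))
        = (f m - f (m + 1)) + 1 / 4 := by
    intro m hm
    simp only [Finset.mem_Icc] at hm
    have hm1 : m + 1 ∈ Finset.Icc 1 n := by
      simp only [Finset.mem_Icc]; omega
    have hsucc : S (m + 1) = S m + s (m + 1) := by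
      rw [hS]
      exact Finset.sum_Icc_succ_top (by omega) s
    have hsm : s (m + 1) ^ 2 = 1 := hsq _ hm1
    have hm0 : (m : ℝ) ≠ 0 := Nat.cast_ne_zero.mpr (by omega)
    have hm0' : (m : ℝ) + 1 ≠ 0 := by positivity
    have key : ((m : ℝ) * s (m + 1) - S m) ^ 2 / (4 * m * (m + 1))
        - (((S m ^ 2 / (4 * m)) - (S m + s (m + 1)) ^ 2 / (4 * (m + 1))) + 1 / 4)
        = (s (m + 1) ^ 2 - 1) / 4 := by
      field_simp
      ring
    rw [hsm] at key
    have hf1 : f m = S m ^ 2 / (4 * m) := rfl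
    have hf2 : f (m + 1) = (S m + s (m + 1)) ^ 2 / (4 * (m + 1)) := by
      simp only [hf, hsucc]
      push_cast
      ring_nf
    rw [hf1, hf2]
    linarith [key]
  rw [Finset.sum_congr rfl hterm, Finset.sum_add_distrib]
  -- telescoping
  have htel : ∑ m ∈ Finset.Icc 1 (n - 1), (f m - f (m + 1)) = f 1 - f n := by
    rw [tel_aux f (n - 1), show n - 1 + 1 = n by omega]
  rw [htel]
  -- value of S n
  have hSn : S n = (n : ℝ) - 2 * k := by
    show ∑ j ∈ Finset.Icc 1 n, s j = (n : ℝ) - 2 * k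
    have hsplit := Finset.sum_filter_add_sum_filter_not (Finset.Icc 1 n)
      (fun j => s j = -1) s
    have h1 : ∑ j ∈ (Finset.Icc 1 n).filter (fun j => s j = -1), s j = -(k : ℝ) := by
      rw [Finset.sum_congr rfl (fun j hj => (Finset.mem_filter.mp hj).2)]
      simp [hcard]
    have h2 : ∑ j ∈ (Finset.Icc 1 n).filter (fun j => ¬ s j = -1), s j
        = ((n : ℝ) - k) := by
      have hval : ∀ j ∈ (Finset.Icc 1 n).filter (fun j => ¬ s j = -1), s j = 1 := by
        intro j hj
        rcases Finset.mem_filter.mp hj with ⟨hj1, hj2⟩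
        rcases hs j hj1 with h | h
        · exact h
        · exact absurd h hj2
      rw [Finset.sum_congr rfl hval, Finset.sum_const, nsmul_eq_mul, mul_one]
      have hc : ((Finset.Icc 1 n).filter (fun j => ¬ s j = -1)).card = n - k := by
        have := Finset.card_filter_add_card_filter_not
          (s := Finset.Icc 1 n) (p := fun j => s j = -1)
        simp only [Nat.card_Icc] at this
        omega
      rw [hc, Nat.cast_sub hk]
    rw [← hsplit, h1, h2]
    ring
  have hS1 : S 1 ^ 2 = 1 := by
    have h1 : S 1 = s 1 := by simp [hS]
    rw [h1]
    exact hsq 1 (by simp [Finset.mem_Icc]; omega)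
  have hff1 : f 1 = 1 / 4 := by
    simp only [hf, hS1]
    norm_num
  have hffn : f n = ((n : ℝ) - 2 * k) ^ 2 / (4 * n) := by
    simp only [hf, hSn]
  rw [hff1, hffn]
  simp only [Finset.sum_const, Nat.card_Icc, nsmul_eq_mul]
  have hcast : ((n - 1 + 1 - 1 : ℕ) : ℝ) = (n : ℝ) - 1 := by
    rw [show n - 1 + 1 - 1 = n - 1 by omega, Nat.cast_sub hn, Nat.cast_one]
  rw [hcast]
  have hn0 : (n : ℝ) ≠ 0 := Nat.cast_ne_zero.mpr (by omega)
  field_simp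
  ring
end
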